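/- If L is a locally uniform 2-lobster of length k ≥ 1 and f is an optimal independent broadcast on L, then there exists an optimal independent broadcast f̃ on L such that f̃(ℓ) ≤ 3 for every leaf ℓ of the end spine-subtrees S_0 and S_k. -/

import Mathlib

noncomputable section

open scoped Classical

variable {V : Type*}

/-- A pendent vertex (leaf): a vertex with exactly one neighbour. -/
def SimpleGraph.IsLeafVert (G : SimpleGraph V) (v : V) : Prop :=
  (G.neighborSet v).ncard = 1

/-- The eccentricity of a vertex: the maximum distance from it to any vertex. -/
def ecc [Fintype V] (G : SimpleGraph V) (v : V) : ℕ :=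
  Finset.univ.sup fun u => G.dist v u

/-- The diameter of a graph: the maximum eccentricity. -/
def gdiam [Fintype V] (G : SimpleGraph V) : ℕ :=
  Finset.univ.sup fun v => ecc G v

/-- A broadcast on `G`: `f v ≤ e_G(v)` for every vertex `v`. -/
def IsBroadcast [Fintype V] (G : SimpleGraph V) (f : V → ℕ) : Prop :=
  ∀ v, f v ≤ ecc G v

/-- The cost of a broadcast. -/
def bcost [Fintype V] (f : V → ℕ) : ℕ :=
  ∑ v, f v

/-- An independent broadcast: a broadcast such that every two distinct broadcast
vertices `u, v` satisfy `d_G(u,v) > max (f u) (f v)`. -/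
def IsIndepBroadcast [Fintype V] (G : SimpleGraph V) (f : V → ℕ) : Prop :=
  IsBroadcast G f ∧
    ∀ u v : V, u ≠ v → 0 < f u → 0 < f v → max (f u) (f v) < G.dist u v

/-- The broadcast independence number: maximum cost of an independent broadcast. -/
def betaB [Fintype V] (G : SimpleGraph V) : ℕ :=
  sSup {c : ℕ | ∃ f : V → ℕ, IsIndepBroadcast G f ∧ bcost f = c}

/-- A dominating broadcast: every vertex is within distance `f u` of some
broadcast vertex `u`. -/
def IsDominatingBroadcast [Fintype V] (G : SimpleGraph V) (f : V → ℕ) : Prop :=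
  ∀ w : V, ∃ u : V, 0 < f u ∧ G.dist u w ≤ f u

/-- A graph is a (nonempty) path graph if its vertices can be enumerated
`w_0, …, w_n` with adjacency exactly between consecutive vertices. -/
def IsPathGraph {W : Type*} (P : SimpleGraph W) : Prop :=
  ∃ (n : ℕ) (e : W ≃ Fin (n + 1)),
    ∀ a b : W, P.Adj a b ↔ ((e a : ℕ) + 1 = (e b : ℕ) ∨ (e b : ℕ) + 1 = (e a : ℕ))

/-- The set of non-leaf vertices. -/
def nonleaves (G : SimpleGraph V) : Set V :=
  {v | ¬ G.IsLeafVert v}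

/-- The graph obtained from `G` by deleting all its leaves. -/
def pruned (G : SimpleGraph V) : SimpleGraph (nonleaves G) :=
  SimpleGraph.induce (nonleaves G) G

/-- A caterpillar: a tree such that deleting all leaves yields a nonempty path. -/
def IsCaterpillar (G : SimpleGraph V) : Prop :=
  G.IsTree ∧ IsPathGraph (pruned G)

/-- A lobster: a tree such that deleting all leaves yields a caterpillar. -/
def IsLobster (G : SimpleGraph V) : Prop :=
  G.IsTree ∧ IsCaterpillar (pruned G)

/-- The set of spine vertices of a lobster: the vertices remaining after
deleting all leaves and then all leaves of the resulting caterpillar. -/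
def spineSet (G : SimpleGraph V) : Set V :=
  {x | ∃ h : x ∈ nonleaves G, (⟨x, h⟩ : nonleaves G) ∈ nonleaves (pruned G)}

/-- An enumeration `v 0, …, v k` of the spine of a lobster as a path. -/
structure SpineEnum (G : SimpleGraph V) (k : ℕ) where
  v : ℕ → V
  inj : ∀ i ≤ k, ∀ j ≤ k, v i = v j → i = j
  mem : ∀ x : V, x ∈ spineSet G ↔ ∃ i ≤ k, v i = x
  adj : ∀ i ≤ k, ∀ j ≤ k, (G.Adj (v i) (v j) ↔ i + 1 = j ∨ j + 1 = i)

/-- The graph obtained from `G` by deleting all spine edges. -/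
def offSpine (G : SimpleGraph V) : SimpleGraph V :=
  G.deleteEdges {e : Sym2 V | ∀ x ∈ e, x ∈ spineSet G}

/-- The vertex set of the spine-subtree rooted at `u`: the connected component
of `u` after deleting all spine edges. -/
def Ssub (G : SimpleGraph V) (u : V) : Set V :=
  {x | (offSpine G).Reachable u x}

/-- `f*(S_u)`: the sum of the values of `f` on the spine-subtree rooted at `u`. -/
def fstar (G : SimpleGraph V) (f : V → ℕ) (u : V) : ℕ :=
  ∑ᶠ x ∈ Ssub G u, f x

/-- A spine-subtree rooted at `u` is of type S1 if every leaf in it is at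
distance 1 from `u`. -/
def typeS1 (G : SimpleGraph V) (u : V) : Prop :=
  ∀ x ∈ Ssub G u, G.IsLeafVert x → G.dist u x = 1

/-- A spine-subtree rooted at `u` is of type S2 if every leaf in it is at
distance 2 from `u`. -/
def typeS2 (G : SimpleGraph V) (u : V) : Prop :=
  ∀ x ∈ Ssub G u, G.IsLeafVert x → G.dist u x = 2

/-- A lobster is locally uniform if every spine-subtree is of type S1 or S2. -/
def LocallyUniform (G : SimpleGraph V) {k : ℕ} (s : SpineEnum G k) : Prop :=
  ∀ i ≤ k, typeS1 G (s.v i) ∨ typeS2 G (s.v i)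

/-- The roots of the branches of the spine-subtree rooted at `u`:
the non-spine neighbours of `u`. -/
def branchRoots (G : SimpleGraph V) (u : V) : Set V :=
  (offSpine G).neighborSet u

/-- A 2-lobster: every spine-subtree has at least two branches. -/
def IsTwoLobster (G : SimpleGraph V) {k : ℕ} (s : SpineEnum G k) : Prop :=
  ∀ i ≤ k, 2 ≤ (branchRoots G (s.v i)).ncard

/-- The 1-leaves of the spine-subtree rooted at `u`. -/
def oneLeaves (G : SimpleGraph V) (u : V) : Set V :=
  {x | x ∈ Ssub G u ∧ G.IsLeafVert x ∧ G.dist u x = 1}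

/-- The 2-leaves of the spine-subtree rooted at `u`. -/
def twoLeaves (G : SimpleGraph V) (u : V) : Set V :=
  {x | x ∈ Ssub G u ∧ G.IsLeafVert x ∧ G.dist u x = 2}

/-- An only-leaf: a leaf whose neighbour has exactly one leaf neighbour. -/
def IsOnlyLeaf (G : SimpleGraph V) (x : V) : Prop :=
  G.IsLeafVert x ∧ ∀ y : V, G.Adj x y → {z | G.Adj y z ∧ G.IsLeafVert z}.ncard = 1

/-- The 2-only-leaves of the spine-subtree rooted at `u`. -/
def twoOnlyLeaves (G : SimpleGraph V) (u : V) : Set V :=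
  {x | x ∈ twoLeaves G u ∧ IsOnlyLeaf G x}

/-- `λ1(S_u)`: the number of 1-leaves of the spine-subtree rooted at `u`. -/
def lam1 (G : SimpleGraph V) (u : V) : ℕ := (oneLeaves G u).ncard

/-- `λ2(S_u)`: the number of 2-leaves of the spine-subtree rooted at `u`. -/
def lam2 (G : SimpleGraph V) (u : V) : ℕ := (twoLeaves G u).ncard

/-- `λ2*(S_u)`: the number of 2-only-leaves of the spine-subtree rooted at `u`. -/
def lam2star (G : SimpleGraph V) (u : V) : ℕ := (twoOnlyLeaves G u).ncard

/-- The 2-leaves of the branch of `S_u` rooted at the neighbour `w` of `u`. -/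
def branchTwoLeaves (G : SimpleGraph V) (u w : V) : Set V :=
  {x | G.Adj w x ∧ x ≠ u ∧ G.IsLeafVert x}

/-- The branches of `S_u` having at most two 2-leaves. -/
def smallBranches (G : SimpleGraph V) (u : V) : Set V :=
  {w | w ∈ branchRoots G u ∧ (branchTwoLeaves G u w).ncard ≤ 2}

/-- `α2*(S_u)`: the number of branches of `S_u` containing no 1-leaf
(type B2) and having at most two 2-leaves. -/
def alpha2star (G : SimpleGraph V) (u : V) : ℕ :=
  {w | w ∈ branchRoots G u ∧ ¬ G.IsLeafVert w ∧
    (branchTwoLeaves G u w).ncard ≤ 2}.ncard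

/-- Type F_A: type S2 and every branch has at least three 2-leaves. -/
def typeFA (G : SimpleGraph V) (u : V) : Prop :=
  typeS2 G u ∧ ∀ w ∈ branchRoots G u, 3 ≤ (branchTwoLeaves G u w).ncard

/-- Type X_a: type S1 with at least three leaves. -/
def typeXa (G : SimpleGraph V) (u : V) : Prop :=
  typeS1 G u ∧ 3 ≤ lam1 G u

/-- Type X_b: type S2 with exactly one branch having at most two 2-leaves. -/
def typeXb (G : SimpleGraph V) (u : V) : Prop :=
  typeS2 G u ∧ (smallBranches G u).ncard = 1

/-- Type Y_C: type S2 with at least two branches having at most two 2-leaves. -/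
def typeYc (G : SimpleGraph V) (u : V) : Prop :=
  typeS2 G u ∧ 2 ≤ (smallBranches G u).ncard

/-- Type G: type S1 with exactly two leaves, having at least one neighbouring
spine-subtree of type S1. -/
def typeG' (G : SimpleGraph V) {k : ℕ} (s : SpineEnum G k) (i : ℕ) : Prop :=
  typeS1 G (s.v i) ∧ lam1 G (s.v i) = 2 ∧
    ((0 < i ∧ typeS1 G (s.v (i - 1))) ∨ (i < k ∧ typeS1 G (s.v (i + 1))))

/-- Type X_c: type S1 with exactly two leaves, both neighbouring spine-subtrees
existing and being of type S2. -/
def typeXc (G : SimpleGraph V) {k : ℕ} (s : SpineEnum G k) (i : ℕ) : Prop :=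
  typeS1 G (s.v i) ∧ lam1 G (s.v i) = 2 ∧
    0 < i ∧ i < k ∧ typeS2 G (s.v (i - 1)) ∧ typeS2 G (s.v (i + 1))

/-- Type X: type X_a, X_b or X_c. -/
def typeX (G : SimpleGraph V) {k : ℕ} (s : SpineEnum G k) (i : ℕ) : Prop :=
  typeXa G (s.v i) ∨ typeXb G (s.v i) ∨ typeXc G s i

/-- Type F_A, G or X_a. -/
def FGXa (G : SimpleGraph V) {k : ℕ} (s : SpineEnum G k) (i : ℕ) : Prop :=
  typeFA G (s.v i) ∨ typeG' G s i ∨ typeXa G (s.v i)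

/-- The sequence of spine-subtrees `S i, S (i+1), …, S (i + 2*j)` is of type T_4. -/
def isT4 (G : SimpleGraph V) {k : ℕ} (s : SpineEnum G k) (i j : ℕ) : Prop :=
  i + 2 * j ≤ k ∧
  (∀ m ≤ j, typeFA G (s.v (i + 2 * m))) ∧
  (∀ m < j, typeX G s (i + 2 * m + 1) ∨ typeFA G (s.v (i + 2 * m + 1))) ∧
  (¬ (2 ≤ i ∧ typeFA G (s.v (i - 2)) ∧
      (typeX G s (i - 1) ∨ typeFA G (s.v (i - 1))))) ∧
  (¬ (i + 2 * j + 2 ≤ k ∧ typeFA G (s.v (i + 2 * j + 2)) ∧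
      (typeX G s (i + 2 * j + 1) ∨ typeFA G (s.v (i + 2 * j + 1))))) ∧
  (1 ≤ i → FGXa G s (i - 1)) ∧
  (2 ≤ i → ¬ typeXc G s (i - 2)) ∧
  (i + 2 * j + 1 ≤ k → FGXa G s (i + 2 * j + 1)) ∧
  (i + 2 * j + 2 ≤ k → ¬ typeXc G s (i + 2 * j + 2))

/-- The spine-subtree `S i` belongs to some sequence of type T_4. -/
def inT4 (G : SimpleGraph V) {k : ℕ} (s : SpineEnum G k) (i : ℕ) : Prop :=
  ∃ a j, isT4 G s a j ∧ a ≤ i ∧ i ≤ a + 2 * j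

/-- The spine-subtree `S i` appears as an F_A-spine-subtree (even offset)
in some sequence of type T_4. -/
def inT4asFA (G : SimpleGraph V) {k : ℕ} (s : SpineEnum G k) (i : ℕ) : Prop :=
  ∃ a j, isT4 G s a j ∧ ∃ m ≤ j, i = a + 2 * m

/-- The 1-leaves of the lobster `G`: leaves adjacent to a spine vertex. -/
def oneLeavesL (G : SimpleGraph V) : Set V :=
  {x | G.IsLeafVert x ∧ ∃ u ∈ spineSet G, G.Adj u x}

/-- The 2-leaves of the lobster `G`: leaves not adjacent to any spine vertex
(i.e. at distance 2 from their nearest spine vertex). -/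
def twoLeavesL (G : SimpleGraph V) : Set V :=
  {x | G.IsLeafVert x ∧ ¬ ∃ u ∈ spineSet G, G.Adj u x}

/-- `λ1(L)`: the number of 1-leaves of `G`. -/
def lam1L (G : SimpleGraph V) : ℕ := (oneLeavesL G).ncard

/-- `λ2(L)`: the number of 2-leaves of `G`. -/
def lam2L (G : SimpleGraph V) : ℕ := (twoLeavesL G).ncard

/-- `λ2*(L)`: the number of 2-only-leaves of `G`. -/
def lam2starL (G : SimpleGraph V) : ℕ :=
  {x | x ∈ twoLeavesL G ∧ IsOnlyLeaf G x}.ncard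

/-- `ν2(L)`: the number of branches having at most two 2-leaves that belong
to spine-subtrees of type S2. -/
def nu2 (G : SimpleGraph V) {k : ℕ} (s : SpineEnum G k) : ℕ :=
  ∑ i ∈ Finset.range (k + 1),
    if typeS2 G (s.v i) then (smallBranches G (s.v i)).ncard else 0

/-- `ν3(L)`: the number of spine-subtrees of type X_c. -/
def nu3 (G : SimpleGraph V) {k : ℕ} (s : SpineEnum G k) : ℕ :=
  ((Finset.range (k + 1)).filter (fun i => typeXc G s i)).card

/-- `ν4(L)`: the sum over all sequences of type T_4 of
`(j + 1) - #(spine-subtrees of type X_b or X_c in the sequence)`. -/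
def nu4 (G : SimpleGraph V) {k : ℕ} (s : SpineEnum G k) : ℕ :=
  ∑ i ∈ Finset.range (k + 1), ∑ j ∈ Finset.range (k + 1),
    if isT4 G s i j then
      (j + 1) - ((Finset.range (2 * j + 1)).filter
        (fun m => typeXb G (s.v (i + m)) ∨ typeXc G s (i + m))).card
    else 0

/-- `β*(L) = ν1(L) + ν2(L) + ν3(L) + ν4(L)` where
`ν1(L) = λ1(L) + λ2(L) + λ2*(L)`. -/
def betaStar (G : SimpleGraph V) {k : ℕ} (s : SpineEnum G k) : ℕ :=
  (lam1L G + lam2L G + lam2starL G) + nu2 G s + nu3 G s + nu4 G s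


namespace SB

open SimpleGraph

variable {V : Type*}

lemma offSpine_adj {G : SimpleGraph V} {u v : V} :
    (offSpine G).Adj u v ↔ G.Adj u v ∧ ¬ (u ∈ spineSet G ∧ v ∈ spineSet G) := by
  simp only [offSpine, SimpleGraph.deleteEdges_adj, Set.mem_setOf_eq]
  constructor
  · rintro ⟨h1, h2⟩
    refine ⟨h1, fun hc => h2 ?_⟩
    intro x hx
    rw [Sym2.mem_iff] at hx
    rcases hx with rfl | rfl
    · exact hc.1
    · exact hc.2
  · rintro ⟨h1, h2⟩
    refine ⟨h1, fun hc => h2 ⟨?_, ?_⟩⟩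
    · exact hc u (by simp)
    · exact hc v (by simp)

lemma leaf_unique_nbr {G : SimpleGraph V} {z : V} (hz : G.IsLeafVert z) :
    ∃ w, G.neighborSet z = {w} := by
  rwa [SimpleGraph.IsLeafVert, Set.ncard_eq_one] at hz

lemma nbr_eq {G : SimpleGraph V} {z w a : V} (h : G.neighborSet z = {w})
    (ha : G.Adj z a) : a = w := by
  have : a ∈ G.neighborSet z := ha
  rw [h] at this
  exact this

/-- a set closed under adjacency contains the whole component -/
lemma walk_closed {G : SimpleGraph V} {S : Set V}
    (hS : ∀ ⦃a b : V⦄, a ∈ S → G.Adj a b → b ∈ S) :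
    ∀ {a u : V}, G.Walk a u → a ∈ S → u ∈ S := by
  intro a u p
  induction p with
  | nil => exact fun h => h
  | cons h q ih => exact fun ha => ih (hS ha h)

/-- in a connected graph with some non-leaf vertex, two leaves are never adjacent -/
lemma no_adjacent_leaves {G : SimpleGraph V} (hc : G.Connected) {a b c : V}
    (ha : G.IsLeafVert a) (hb : G.IsLeafVert b) (hab : G.Adj a b)
    (hcl : ¬ G.IsLeafVert c) : False := by
  obtain ⟨a', hA⟩ := leaf_unique_nbr ha
  obtain ⟨b', hB⟩ := leaf_unique_nbr hb
  rw [← nbr_eq hA hab] at hA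
  rw [← nbr_eq hB hab.symm] at hB
  have hca : c ≠ a := fun h => hcl (h ▸ ha)
  have hcb : c ≠ b := fun h => hcl (h ▸ hb)
  obtain ⟨p⟩ := hc.preconnected a c
  obtain ⟨d, _, hd1, hd2⟩ := p.exists_boundary_dart ({a, b} : Set V) (by simp) (by simp only [Set.mem_insert_iff, Set.mem_singleton_iff]; push_neg; exact ⟨hca, hcb⟩)
  rcases hd1 with h1 | h1
  · exact hd2 (Or.inr (by rw [← h1] at hA; exact nbr_eq hA d.adj))
  · exact hd2 (Or.inl (by rw [← h1] at hB; exact nbr_eq hB d.adj))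

/-- distance additivity through an unavoidable vertex -/
lemma dist_cut {G : SimpleGraph V} (hc : G.Connected) {a b c : V}
    (h : ∀ p : G.Walk a b, c ∈ p.support) :
    G.dist a b = G.dist a c + G.dist c b := by
  refine le_antisymm hc.dist_triangle ?_
  obtain ⟨p, hp⟩ := hc.exists_walk_length_eq_dist a b
  have hcp := h p
  have hsplit := congrArg Walk.length (p.take_spec hcp)
  rw [Walk.length_append] at hsplit
  calc G.dist a c + G.dist c b
      ≤ (p.takeUntil c hcp).length + (p.dropUntil c hcp).length :=
        Nat.add_le_add (SimpleGraph.dist_le _) (SimpleGraph.dist_le _)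
    _ = p.length := hsplit
    _ = G.dist a b := hp

/-- every walk out of a leaf passes through its unique neighbour -/
lemma leaf_cut {G : SimpleGraph V} {z w b : V} (hz : G.neighborSet z = {w}) (hb : b ≠ z)
    (p : G.Walk z b) : w ∈ p.support := by
  obtain ⟨d, hdmem, hd1, hd2⟩ := p.exists_boundary_dart ({z} : Set V) rfl (by simp [hb])
  have : d.fst = z := hd1
  have hsnd : d.snd = w := nbr_eq hz (this ▸ d.adj)
  exact hsnd ▸ p.dart_snd_mem_support_of_mem_darts hdmem

lemma dist_leaf_split {G : SimpleGraph V} (hc : G.Connected) {z w b : V}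
    (hz : G.neighborSet z = {w}) (hb : b ≠ z) :
    G.dist z b = 1 + G.dist w b := by
  have hadj : G.Adj z w := by
    have : w ∈ G.neighborSet z := by rw [hz]; rfl
    exact this
  rw [dist_cut hc (fun p => leaf_cut hz hb p)]
  congr 1
  exact SimpleGraph.dist_eq_one_iff_adj.mpr hadj

/-- ℤ-valued 1-Lipschitz functions along walks -/
lemma walk_lipschitz {G : SimpleGraph V} {φ : V → ℤ}
    (hφ : ∀ ⦃a b : V⦄, G.Adj a b → φ b ≤ φ a + 1) :
    ∀ {a u : V}, (p : G.Walk a u) → φ u ≤ φ a + p.length := by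
  intro a u p
  induction p with
  | nil => simp
  | cons h q ih =>
      have h1 := hφ h
      simp only [Walk.length_cons]
      push_cast
      omega

lemma dist_lipschitz {G : SimpleGraph V} (hc : G.Connected) {φ : V → ℤ}
    (hφ : ∀ ⦃a b : V⦄, G.Adj a b → φ b ≤ φ a + 1) (a u : V) :
    φ u ≤ φ a + G.dist a u := by
  obtain ⟨p, hp⟩ := hc.exists_walk_length_eq_dist a u
  have := walk_lipschitz hφ p
  rwa [hp] at this

/-- two distinct common neighbours give non-adjacency in a tree -/
lemma tree_no_triangle {G : SimpleGraph V} (hT : G.IsTree) {a b c : V}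
    (hca : G.Adj c a) (hcb : G.Adj c b) (hab : a ≠ b) : ¬ G.Adj a b := by
  intro h
  have p1 : G.Walk a b := Walk.cons h Walk.nil
  have p2 : G.Walk a b := Walk.cons hca.symm (Walk.cons hcb Walk.nil)
  have hp1 : (Walk.cons h Walk.nil : G.Walk a b).IsPath := by
    simp [Walk.isPath_def, hab]
  have hp2 : (Walk.cons hca.symm (Walk.cons hcb Walk.nil) : G.Walk a b).IsPath := by
    simp only [Walk.isPath_def, Walk.support_cons, Walk.support_nil]
    refine List.nodup_cons.mpr ⟨?_, List.nodup_cons.mpr ⟨?_, List.nodup_cons.mpr ⟨?_, List.nodup_nil⟩⟩⟩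
    · simp only [List.mem_cons, List.not_mem_nil, or_false]
      rintro (h' | h')
      · exact hca.ne' h'
      · exact hab h'
    · simp only [List.mem_cons, List.not_mem_nil, or_false]
      exact fun h' => hcb.ne h'
    · simp
  obtain ⟨p, _, huniq⟩ := hT.existsUnique_path a b
  have e1 := huniq _ hp1
  have e2 := huniq _ hp2
  rw [← e2] at e1
  have := congrArg Walk.length e1
  simp at this

lemma two_le_dist {G : SimpleGraph V} (hc : G.Connected) {a b : V}
    (hne : a ≠ b) (hnadj : ¬ G.Adj a b) : 2 ≤ G.dist a b := by
  have h0 : G.dist a b ≠ 0 := fun h => hne (hc.dist_eq_zero_iff.mp h)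
  have h1 : G.dist a b ≠ 1 := fun h => hnadj (SimpleGraph.dist_eq_one_iff_adj.mp h)
  omega

end SB

namespace SB2

open SimpleGraph SB

variable {V : Type*} {G : SimpleGraph V} {k : ℕ}

lemma spine_mem (s : SpineEnum G k) {i : ℕ} (hi : i ≤ k) : s.v i ∈ spineSet G :=
  (s.mem _).mpr ⟨i, hi, rfl⟩

lemma spine_nonleaf_of_mem {x : V} (hx : x ∈ spineSet G) : ¬ G.IsLeafVert x := by
  obtain ⟨h1, _⟩ := hx
  exact h1

lemma spine_nonleaf (s : SpineEnum G k) {i : ℕ} (hi : i ≤ k) : ¬ G.IsLeafVert (s.v i) :=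
  spine_nonleaf_of_mem (spine_mem s hi)

lemma spine_ne (s : SpineEnum G k) {i j : ℕ} (hi : i ≤ k) (hj : j ≤ k) (hij : i ≠ j) :
    s.v i ≠ s.v j := fun h => hij (s.inj i hi j hj h)

lemma pruned_adj {a b : nonleaves G} : (pruned G).Adj a b ↔ G.Adj a.val b.val := Iff.rfl

lemma pruned_leafvert_iff {w : V} (hw : w ∈ nonleaves G) :
    (pruned G).IsLeafVert ⟨w, hw⟩ ↔ {z | G.Adj w z ∧ ¬ G.IsLeafVert z}.ncard = 1 := by
  have himg : Subtype.val '' ((pruned G).neighborSet ⟨w, hw⟩)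
      = {z | G.Adj w z ∧ ¬ G.IsLeafVert z} := by
    ext z
    simp only [Set.mem_image, Set.mem_setOf_eq]
    constructor
    · rintro ⟨⟨b, hb⟩, hadj, rfl⟩
      exact ⟨hadj, hb⟩
    · rintro ⟨hadj, hz⟩
      exact ⟨⟨z, hz⟩, hadj, rfl⟩
  have hcard := Set.ncard_image_of_injective ((pruned G).neighborSet ⟨w, hw⟩)
    Subtype.val_injective
  rw [himg] at hcard
  constructor
  · intro h
    have h' : ((pruned G).neighborSet ⟨w, hw⟩).ncard = 1 := h
    omega
  · intro h
    show ((pruned G).neighborSet ⟨w, hw⟩).ncard = 1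
    omega

/-- a non-leaf vertex not on the spine has a unique non-leaf neighbour,
which lies on the spine; all its other neighbours are leaves. -/
lemma root_structure (hL : IsLobster G) (s : SpineEnum G k) (hk : 1 ≤ k)
    {w : V} (hw1 : ¬ G.IsLeafVert w) (hw2 : w ∉ spineSet G) :
    ∃ u, u ∈ spineSet G ∧ G.Adj w u ∧ ∀ z, G.Adj w z → z ≠ u → G.IsLeafVert z := by
  have hwn : w ∈ nonleaves G := hw1
  have hpl : (pruned G).IsLeafVert ⟨w, hwn⟩ := by
    by_contra hcon
    exact hw2 ⟨hwn, hcon⟩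
  rw [pruned_leafvert_iff hwn, Set.ncard_eq_one] at hpl
  obtain ⟨u, hu⟩ := hpl
  have huw : G.Adj w u ∧ ¬ G.IsLeafVert u := by
    have : u ∈ {z | G.Adj w z ∧ ¬ G.IsLeafVert z} := by rw [hu]; rfl
    exact this
  refine ⟨u, ?_, huw.1, ?_⟩
  · -- u is on the spine
    by_contra husp
    have hun : u ∈ nonleaves G := huw.2
    have hupl : (pruned G).IsLeafVert ⟨u, hun⟩ := by
      by_contra hcon
      exact husp ⟨hun, hcon⟩
    -- adjacent leaves in the pruned graph, contradiction with v0 being a non-leaf there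
    have hv0 := spine_mem s (Nat.zero_le k)
    obtain ⟨h0, h0'⟩ := hv0
    have hconn : (pruned G).Connected := hL.2.1.isConnected
    refine no_adjacent_leaves hconn ?_ hupl ((pruned_adj (a := ⟨w, hwn⟩) (b := ⟨u, hun⟩)).mpr huw.1) (c := ⟨s.v 0, h0⟩) ?_
    · rw [pruned_leafvert_iff hwn, Set.ncard_eq_one]
      exact ⟨u, hu⟩
    · exact h0'
  · intro z hz hzu
    by_contra hzl
    have : z ∈ {z | G.Adj w z ∧ ¬ G.IsLeafVert z} := ⟨hz, hzl⟩
    rw [hu] at this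
    exact hzu this

lemma leaf_nbr_nonleaf (hL : IsLobster G) (s : SpineEnum G k)
    {z n : V} (hz : G.IsLeafVert z) (hn : G.neighborSet z = {n}) : ¬ G.IsLeafVert n := by
  intro hnl
  have hadj : G.Adj z n := by
    have : n ∈ G.neighborSet z := by rw [hn]; rfl
    exact this
  exact no_adjacent_leaves hL.1.isConnected hz hnl hadj (spine_nonleaf s (Nat.zero_le k))

/-- the explicit description of a spine subtree -/
def Aset (G : SimpleGraph V) (y : V) : Set V :=
  {u | u = y ∨ (G.Adj y u ∧ u ∉ spineSet G) ∨
    ∃ w, G.Adj y w ∧ w ∉ spineSet G ∧ ¬ G.IsLeafVert w ∧ G.Adj w u ∧ G.IsLeafVert u}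

lemma Aset_closed (hL : IsLobster G) (s : SpineEnum G k) (hk : 1 ≤ k) {i : ℕ} (hi : i ≤ k) :
    ∀ ⦃a b : V⦄, a ∈ Aset G (s.v i) → (offSpine G).Adj a b → b ∈ Aset G (s.v i) := by
  intro a b ha hab
  obtain ⟨hGab, hnsp⟩ := offSpine_adj.mp hab
  have hysp := spine_mem s hi
  rcases ha with rfl | ⟨hadj, hasp⟩ | ⟨w, hw1, hw2, hw3, hw4, hw5⟩
  · -- a = spine vertex
    exact Or.inr (Or.inl ⟨hGab, fun hbsp => hnsp ⟨hysp, hbsp⟩⟩)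
  · -- a is a branch root
    by_cases hal : G.IsLeafVert a
    · obtain ⟨n, hn⟩ := leaf_unique_nbr hal
      have h1 : s.v i = n := nbr_eq hn hadj.symm
      have h2 : b = n := nbr_eq hn hGab
      exact Or.inl (h2.trans h1.symm)
    · obtain ⟨u, hu1, hu2, hu3⟩ := root_structure hL s hk hal hasp
      have huy : u = s.v i := by
        by_contra hne
        exact spine_nonleaf_of_mem hysp (hu3 _ hadj.symm (fun h => hne h.symm))
      by_cases hby : b = s.v i
      · exact Or.inl hby
      · have hbl : G.IsLeafVert b := hu3 _ hGab (huy ▸ hby)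
        exact Or.inr (Or.inr ⟨a, hadj, hasp, hal, hGab, hbl⟩)
  · -- a is a deep leaf with support w
    obtain ⟨n, hn⟩ := leaf_unique_nbr hw5
    have h1 : w = n := nbr_eq hn hw4.symm
    have h2 : b = n := nbr_eq hn hGab
    rw [h2, ← h1]
    exact Or.inr (Or.inl ⟨hw1, hw2⟩)

lemma Ssub_eq_Aset (hL : IsLobster G) (s : SpineEnum G k) (hk : 1 ≤ k) {i : ℕ} (hi : i ≤ k) :
    Ssub G (s.v i) = Aset G (s.v i) := by
  ext u
  constructor
  · intro hu
    obtain ⟨p⟩ := hu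
    exact walk_closed (Aset_closed hL s hk hi) p (Or.inl rfl)
  · intro hu
    have hysp := spine_mem s hi
    rcases hu with rfl | ⟨hadj, hasp⟩ | ⟨w, hw1, hw2, hw3, hw4, hw5⟩
    · exact SimpleGraph.Reachable.refl _
    · exact (offSpine_adj.mpr ⟨hadj, fun h => hasp h.2⟩).reachable
    · have e1 : (offSpine G).Adj (s.v i) w := offSpine_adj.mpr ⟨hw1, fun h => hw2 h.2⟩
      have e2 : (offSpine G).Adj w u := by
        refine offSpine_adj.mpr ⟨hw4, fun h => hw2 h.1⟩
      exact e1.reachable.trans e2.reachable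

end SB2

namespace SB2

open SimpleGraph SB

variable {V : Type*} {G : SimpleGraph V} {k : ℕ}

/-- distinct spine subtrees are disjoint -/
lemma Aset_disjoint (hL : IsLobster G) (s : SpineEnum G k) (hk : 1 ≤ k)
    {i j : ℕ} (hi : i ≤ k) (hj : j ≤ k) (hij : i ≠ j) {u : V}
    (hui : u ∈ Aset G (s.v i)) (huj : u ∈ Aset G (s.v j)) : False := by
  have hne : s.v i ≠ s.v j := spine_ne s hi hj hij
  have hisp := spine_mem s hi
  have hjsp := spine_mem s hj
  rcases hui with rfl | ⟨hadj, hasp⟩ | ⟨w, hw1, hw2, hw3, hw4, hw5⟩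
  · -- u = v i
    rcases huj with h | ⟨hadj', hasp'⟩ | ⟨w', h1, h2, h3, h4, h5⟩
    · exact hne h
    · exact hasp' hisp
    · exact spine_nonleaf_of_mem hisp h5
  · -- u branch root of v i
    rcases huj with rfl | ⟨hadj', hasp'⟩ | ⟨w', h1, h2, h3, h4, h5⟩
    · exact hasp hjsp
    · by_cases hul : G.IsLeafVert u
      · obtain ⟨n, hn⟩ := leaf_unique_nbr hul
        exact hne ((nbr_eq hn hadj.symm).trans (nbr_eq hn hadj'.symm).symm)
      · obtain ⟨u₀, hu1, hu2, hu3⟩ := root_structure hL s hk hul hasp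
        have e1 : s.v i = u₀ := by
          by_contra hc
          exact spine_nonleaf_of_mem hisp (hu3 _ hadj.symm (fun h => hc h))
        have e2 : s.v j = u₀ := by
          by_contra hc
          exact spine_nonleaf_of_mem hjsp (hu3 _ hadj'.symm (fun h => hc h))
        exact hne (e1.trans e2.symm)
    · -- u leaf (form3 at j), but adjacent to v i (form2 at i)
      obtain ⟨n, hn⟩ := leaf_unique_nbr h5
      have e1 : s.v i = n := nbr_eq hn hadj.symm
      have e2 : w' = n := nbr_eq hn h4.symm
      exact h2 (e2 ▸ e1 ▸ hisp)
  · -- u deep leaf of v i with support w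
    obtain ⟨n, hn⟩ := leaf_unique_nbr hw5
    have ew : w = n := nbr_eq hn hw4.symm
    rcases huj with rfl | ⟨hadj', hasp'⟩ | ⟨w', h1, h2, h3, h4, h5⟩
    · exact spine_nonleaf_of_mem hjsp hw5
    · have e1 : s.v j = n := nbr_eq hn hadj'.symm
      exact hw2 (ew ▸ e1 ▸ hjsp)
    · have ew' : w' = n := nbr_eq hn h4.symm
      obtain ⟨u₀, hu1, hu2, hu3⟩ := root_structure hL s hk hw3 hw2
      have e1 : s.v i = u₀ := by
        by_contra hc
        exact spine_nonleaf_of_mem hisp (hu3 _ hw1.symm (fun h => hc h))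
      have e2 : s.v j = u₀ := by
        by_contra hc
        have := hu3 (s.v j) ?_ (fun h => hc h)
        · exact spine_nonleaf_of_mem hjsp this
        · rw [ew, ← ew']
          exact h1.symm
      exact hne (e1.trans e2.symm)

/-- every vertex lies in some spine subtree -/
lemma Aset_total (hL : IsLobster G) (s : SpineEnum G k) (hk : 1 ≤ k) (u : V) :
    ∃ i, i ≤ k ∧ u ∈ Aset G (s.v i) := by
  by_cases husp : u ∈ spineSet G
  · obtain ⟨i, hi, hv⟩ := (s.mem u).mp husp
    exact ⟨i, hi, Or.inl hv.symm⟩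
  by_cases hul : G.IsLeafVert u
  · obtain ⟨n, hn⟩ := leaf_unique_nbr hul
    have hnadj : G.Adj u n := by
      have : n ∈ G.neighborSet u := by rw [hn]; rfl
      exact this
    have hnl : ¬ G.IsLeafVert n := leaf_nbr_nonleaf hL s hul hn
    by_cases hnsp : n ∈ spineSet G
    · obtain ⟨i, hi, hv⟩ := (s.mem n).mp hnsp
      exact ⟨i, hi, Or.inr (Or.inl ⟨hv ▸ hnadj.symm, husp⟩)⟩
    · obtain ⟨u₀, hu1, hu2, hu3⟩ := root_structure hL s hk hnl hnsp
      obtain ⟨i, hi, hv⟩ := (s.mem u₀).mp hu1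
      exact ⟨i, hi, Or.inr (Or.inr ⟨n, hv ▸ hu2.symm, hnsp, hnl, hnadj.symm, hul⟩)⟩
  · obtain ⟨u₀, hu1, hu2, hu3⟩ := root_structure hL s hk hul husp
    obtain ⟨i, hi, hv⟩ := (s.mem u₀).mp hu1
    exact ⟨i, hi, Or.inr (Or.inl ⟨hv ▸ hu2.symm, husp⟩)⟩

/-- edges between distinct spine subtrees only occur between consecutive spine vertices -/
lemma Aset_edge (hL : IsLobster G) (s : SpineEnum G k) (hk : 1 ≤ k)
    {i j : ℕ} (hi : i ≤ k) (hj : j ≤ k) (hij : i ≠ j) {a b : V}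
    (ha : a ∈ Aset G (s.v i)) (hb : b ∈ Aset G (s.v j)) (hab : G.Adj a b) :
    a = s.v i ∧ b = s.v j ∧ (i + 1 = j ∨ j + 1 = i) := by
  have hne : s.v i ≠ s.v j := spine_ne s hi hj hij
  have hisp := spine_mem s hi
  have hjsp := spine_mem s hj
  have key : ∀ {c : V}, c ∈ Aset G (s.v j) → c ≠ s.v j → ¬ G.Adj (s.v i) c := by
    intro c hc hcne hadj
    rcases hc with rfl | ⟨hadj', hasp'⟩ | ⟨w', h1, h2, h3, h4, h5⟩
    · exact hcne rfl
    · by_cases hcl : G.IsLeafVert c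
      · obtain ⟨n, hn⟩ := leaf_unique_nbr hcl
        exact hne ((nbr_eq hn hadj.symm).trans (nbr_eq hn hadj'.symm).symm)
      · obtain ⟨u₀, hu1, hu2, hu3⟩ := root_structure hL s hk hcl hasp'
        have e1 : s.v i = u₀ := by
          by_contra hcon
          exact spine_nonleaf_of_mem hisp (hu3 _ hadj.symm (fun h => hcon h))
        have e2 : s.v j = u₀ := by
          by_contra hcon
          exact spine_nonleaf_of_mem hjsp (hu3 _ hadj'.symm (fun h => hcon h))
        exact hne (e1.trans e2.symm)
    · obtain ⟨n, hn⟩ := leaf_unique_nbr h5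
      have e1 : s.v i = n := nbr_eq hn hadj.symm
      have e2 : w' = n := nbr_eq hn h4.symm
      exact h2 (e2 ▸ e1 ▸ hisp)
  rcases ha with rfl | ⟨hadj, hasp⟩ | ⟨w, hw1, hw2, hw3, hw4, hw5⟩
  · -- a is the spine vertex v i
    by_cases hbv : b = s.v j
    · subst hbv
      exact ⟨rfl, rfl, (s.adj i hi j hj).mp hab⟩
    · exact absurd hab (key hb hbv)
  · -- a is a branch root of v i : impossible
    exfalso
    by_cases hal : G.IsLeafVert a
    · obtain ⟨n, hn⟩ := leaf_unique_nbr hal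
      have e1 : s.v i = n := nbr_eq hn hadj.symm
      have e2 : b = n := nbr_eq hn hab
      -- b = v i ∈ Aset j : contradiction with disjointness
      exact Aset_disjoint hL s hk hi hj hij (Or.inl (e2.trans e1.symm)) hb
    · obtain ⟨u₀, hu1, hu2, hu3⟩ := root_structure hL s hk hal hasp
      have e1 : s.v i = u₀ := by
        by_contra hcon
        exact spine_nonleaf_of_mem hisp (hu3 _ hadj.symm (fun h => hcon h))
      by_cases hbv : b = s.v i
      · exact Aset_disjoint hL s hk hi hj hij (Or.inl hbv) hb
      · have hbl : G.IsLeafVert b := hu3 _ hab (e1 ▸ hbv)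
        have hbmem : b ∈ Aset G (s.v i) := Or.inr (Or.inr ⟨a, hadj, hasp, hal, hab, hbl⟩)
        exact Aset_disjoint hL s hk hi hj hij hbmem hb
  · -- a deep leaf of v i : impossible
    exfalso
    obtain ⟨n, hn⟩ := leaf_unique_nbr hw5
    have ew : w = n := nbr_eq hn hw4.symm
    have eb : b = n := nbr_eq hn hab
    have hbmem : b ∈ Aset G (s.v i) := by
      rw [eb, ← ew]
      exact Or.inr (Or.inl ⟨hw1, hw2⟩)
    exact Aset_disjoint hL s hk hi hj hij hbmem hb

/-- depth of a spine subtree is at most 2 -/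
lemma Aset_depth (hL : IsLobster G) (s : SpineEnum G k) {i : ℕ} {u : V}
    (hu : u ∈ Aset G (s.v i)) : G.dist (s.v i) u ≤ 2 := by
  have hc := hL.1.isConnected
  rcases hu with rfl | ⟨hadj, _⟩ | ⟨w, hw1, _, _, hw4, _⟩
  · simp [hc.dist_eq_zero_iff.mpr rfl]
  · have := SimpleGraph.dist_eq_one_iff_adj.mpr hadj
    omega
  · calc G.dist (s.v i) u ≤ G.dist (s.v i) w + G.dist w u := hc.dist_triangle
      _ ≤ 1 + 1 := Nat.add_le_add (le_of_eq (SimpleGraph.dist_eq_one_iff_adj.mpr hw1))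
          (le_of_eq (SimpleGraph.dist_eq_one_iff_adj.mpr hw4))
      _ = 2 := rfl

end SB2

namespace SB2

open SimpleGraph SB

variable {V : Type*} {G : SimpleGraph V} {k : ℕ}

/-- the index of the spine subtree containing a vertex -/
noncomputable def posF (hL : IsLobster G) (s : SpineEnum G k) (hk : 1 ≤ k) (u : V) : ℕ :=
  (Aset_total hL s hk u).choose

lemma posF_le (hL : IsLobster G) (s : SpineEnum G k) (hk : 1 ≤ k) (u : V) :
    posF hL s hk u ≤ k := (Aset_total hL s hk u).choose_spec.1

lemma posF_mem (hL : IsLobster G) (s : SpineEnum G k) (hk : 1 ≤ k) (u : V) :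
    u ∈ Aset G (s.v (posF hL s hk u)) := (Aset_total hL s hk u).choose_spec.2

lemma posF_unique (hL : IsLobster G) (s : SpineEnum G k) (hk : 1 ≤ k) {u : V} {i : ℕ}
    (hi : i ≤ k) (hu : u ∈ Aset G (s.v i)) : posF hL s hk u = i := by
  by_contra hne
  exact Aset_disjoint hL s hk (posF_le hL s hk u) hi hne (posF_mem hL s hk u) hu

lemma posF_spine (hL : IsLobster G) (s : SpineEnum G k) (hk : 1 ≤ k) {i : ℕ} (hi : i ≤ k) :
    posF hL s hk (s.v i) = i := posF_unique hL s hk hi (Or.inl rfl)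

lemma posF_adj (hL : IsLobster G) (s : SpineEnum G k) (hk : 1 ≤ k) {a b : V}
    (hab : G.Adj a b) :
    ((posF hL s hk b : ℤ)) ≤ (posF hL s hk a : ℤ) + 1 := by
  set i := posF hL s hk a with hia
  set j := posF hL s hk b with hjb
  by_cases hij : i = j
  · omega
  · obtain ⟨_, _, hcon⟩ := Aset_edge hL s hk (posF_le hL s hk a) (posF_le hL s hk b) hij
      (posF_mem hL s hk a) (posF_mem hL s hk b) hab
    rcases hcon with h | h <;> omega

/-- the subtree index is a lower bound for the distance from the first spine vertex -/
lemma posF_le_dist (hL : IsLobster G) (s : SpineEnum G k) (hk : 1 ≤ k) (u : V) :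
    (posF hL s hk u : ℤ) ≤ G.dist (s.v 0) u := by
  have h := dist_lipschitz hL.1.isConnected (φ := fun u => (posF hL s hk u : ℤ))
    (fun a b hab => posF_adj hL s hk hab) (s.v 0) u
  rw [posF_spine hL s hk (Nat.zero_le k)] at h
  simpa using h

lemma dist_spine_le (hL : IsLobster G) (s : SpineEnum G k) :
    ∀ d i, i + d ≤ k → G.dist (s.v i) (s.v (i + d)) ≤ d := by
  intro d
  induction d with
  | zero => intro i hi; simp [hL.1.isConnected.dist_eq_zero_iff.mpr rfl]
  | succ d ih =>
      intro i hi
      have h1 : G.dist (s.v i) (s.v (i + d)) ≤ d := ih i (by omega)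
      have hadj : G.Adj (s.v (i + d)) (s.v (i + d + 1)) := by
        refine (s.adj (i + d) (by omega) (i + d + 1) (by omega)).mpr (Or.inl rfl)
      have h2 : G.dist (s.v (i + d)) (s.v (i + d + 1)) = 1 :=
        SimpleGraph.dist_eq_one_iff_adj.mpr hadj
      calc G.dist (s.v i) (s.v (i + (d + 1)))
          = G.dist (s.v i) (s.v (i + d + 1)) := by ring_nf
        _ ≤ G.dist (s.v i) (s.v (i + d)) + G.dist (s.v (i + d)) (s.v (i + d + 1)) :=
            hL.1.isConnected.dist_triangle
        _ ≤ d + 1 := by omega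

lemma dist_spine_le' (hL : IsLobster G) (s : SpineEnum G k) {i j : ℕ} (hij : i ≤ j)
    (hj : j ≤ k) : G.dist (s.v i) (s.v j) ≤ j - i := by
  have := dist_spine_le hL s (j - i) i (by omega)
  rwa [Nat.add_sub_cancel' hij] at this

/-- distance from a branch root to vertices outside its subtree goes through
the spine vertex -/
lemma root_cut (hL : IsLobster G) (s : SpineEnum G k) (hk : 1 ≤ k) {i : ℕ} (hi : i ≤ k)
    {r : V} (hr : G.Adj (s.v i) r) (hrsp : r ∉ spineSet G) (hrnl : ¬ G.IsLeafVert r)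
    {u : V} (hu : u ∉ Aset G (s.v i)) :
    G.dist r u = 1 + G.dist (s.v i) u := by
  obtain ⟨u₀, hu1, hu2, hu3⟩ := root_structure hL s hk hrnl hrsp
  have e1 : s.v i = u₀ := by
    by_contra hcon
    exact spine_nonleaf_of_mem (spine_mem s hi) (hu3 _ hr.symm (fun h => hcon h))
  have hpass : ∀ p : G.Walk r u, s.v i ∈ p.support := by
    intro p
    set S : Set V := {r} ∪ {z | G.Adj r z ∧ G.IsLeafVert z} with hS
    have hrS : r ∈ S := Or.inl rfl
    have hSsub : S ⊆ Aset G (s.v i) := by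
      rintro z (rfl | ⟨hz1, hz2⟩)
      · exact Or.inr (Or.inl ⟨hr, hrsp⟩)
      · exact Or.inr (Or.inr ⟨r, hr, hrsp, hrnl, hz1, hz2⟩)
    obtain ⟨d, hdmem, hd1, hd2⟩ := p.exists_boundary_dart S hrS (fun h => hu (hSsub h))
    rcases hd1 with hd1 | hd1
    · -- d.fst = r
      by_cases hsnd : d.snd = s.v i
      · exact hsnd ▸ p.dart_snd_mem_support_of_mem_darts hdmem
      · exfalso
        have hadj : G.Adj r d.snd := by rw [← hd1]; exact d.adj
        have : G.IsLeafVert d.snd := hu3 _ hadj (fun h => hsnd (h.trans e1.symm))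
        exact hd2 (Or.inr ⟨hadj, this⟩)
    · -- d.fst is a leaf neighbour of r
      exfalso
      obtain ⟨hz1, hz2⟩ := hd1
      obtain ⟨n, hn⟩ := leaf_unique_nbr hz2
      have er : r = n := nbr_eq hn hz1.symm
      have esnd : d.snd = n := nbr_eq hn d.adj
      exact hd2 (Or.inl (esnd.trans er.symm))
  rw [dist_cut hL.1.isConnected hpass, SimpleGraph.dist_eq_one_iff_adj.mpr hr.symm]

/-- the distance formula for leaves of a spine subtree -/
lemma leaf_dist_formula (hL : IsLobster G) (s : SpineEnum G k) (hk : 1 ≤ k) {i : ℕ}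
    (hi : i ≤ k) {z : V} (hz : z ∈ Aset G (s.v i)) (hzl : G.IsLeafVert z) :
    ∃ d, (d = 1 ∨ d = 2) ∧ G.dist (s.v i) z = d ∧
      (∀ u, u ∉ Aset G (s.v i) → G.dist z u = d + G.dist (s.v i) u) := by
  have hc := hL.1.isConnected
  rcases hz with rfl | ⟨hadj, hasp⟩ | ⟨w, hw1, hw2, hw3, hw4, hw5⟩
  · exact absurd hzl (spine_nonleaf s hi)
  · -- depth 1
    obtain ⟨n, hn⟩ := leaf_unique_nbr hzl
    have e1 : s.v i = n := nbr_eq hn hadj.symm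
    refine ⟨1, Or.inl rfl, SimpleGraph.dist_eq_one_iff_adj.mpr hadj, ?_⟩
    intro u hu
    have hne : u ≠ z := fun h => hu (h ▸ Or.inr (Or.inl ⟨hadj, hasp⟩))
    rw [dist_leaf_split hc hn hne, ← e1]
  · -- depth 2
    obtain ⟨n, hn⟩ := leaf_unique_nbr hw5
    have ew : w = n := nbr_eq hn hw4.symm
    have hmem : z ∈ Aset G (s.v i) := Or.inr (Or.inr ⟨w, hw1, hw2, hw3, hw4, hw5⟩)
    have hzvi : z ≠ s.v i := fun h => spine_nonleaf s hi (h ▸ hzl)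
    have hnadj : ¬ G.Adj (s.v i) z := by
      intro hadj
      have : s.v i = n := nbr_eq hn hadj.symm
      have ewvi : w = s.v i := ew.trans this.symm
      exact hw2 (ewvi ▸ spine_mem s hi)
    have hd2 : G.dist (s.v i) z = 2 := by
      have hle : G.dist (s.v i) z ≤ 2 := Aset_depth hL s hmem
      have hge : 2 ≤ G.dist (s.v i) z := two_le_dist hc (Ne.symm hzvi) hnadj
      omega
    refine ⟨2, Or.inr rfl, hd2, ?_⟩
    intro u hu
    have hne : u ≠ z := fun h => hu (h ▸ hmem)
    rw [dist_leaf_split hc hn hne, ← ew,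
      root_cut hL s hk hi hw1 hw2 hw3 hu]
    omega

end SB2

namespace SB2

open SimpleGraph SB

variable {V : Type*} {G : SimpleGraph V} {k : ℕ}

lemma branchRoots_mem (s : SpineEnum G k) {i : ℕ} (hi : i ≤ k) {w : V} :
    w ∈ branchRoots G (s.v i) ↔ G.Adj (s.v i) w ∧ w ∉ spineSet G := by
  constructor
  · intro h
    obtain ⟨h1, h2⟩ := offSpine_adj.mp h
    exact ⟨h1, fun hw => h2 ⟨spine_mem s hi, hw⟩⟩
  · rintro ⟨h1, h2⟩
    exact offSpine_adj.mpr ⟨h1, fun hc => h2 hc.2⟩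

lemma nonleaf_second_nbr {r : V} (hr : ¬ G.IsLeafVert r) {a : V} (ha : G.Adj r a)
    [Fintype V] : ∃ z, G.Adj r z ∧ z ≠ a := by
  have h1 : (G.neighborSet r).ncard ≠ 1 := hr
  have h2 : 0 < (G.neighborSet r).ncard := by
    rw [Set.ncard_pos (Set.toFinite _)]
    exact ⟨a, ha⟩
  have h3 : 1 < (G.neighborSet r).ncard := by omega
  obtain ⟨z, hz, hza⟩ := Set.exists_ne_of_one_lt_ncard h3 a
  exact ⟨z, hz, hza⟩

lemma subtree_has_leaf [Fintype V] (hL : IsLobster G) (s : SpineEnum G k) (hk : 1 ≤ k)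
    (h2 : IsTwoLobster G s) {i : ℕ} (hi : i ≤ k) :
    ∃ z, z ∈ Aset G (s.v i) ∧ G.IsLeafVert z := by
  have hcard := h2 i hi
  have hpos : 0 < (branchRoots G (s.v i)).ncard := by omega
  rw [Set.ncard_pos (Set.toFinite _)] at hpos
  obtain ⟨r, hr⟩ := hpos
  obtain ⟨hr1, hr2⟩ := (branchRoots_mem s hi).mp hr
  by_cases hrl : G.IsLeafVert r
  · exact ⟨r, Or.inr (Or.inl ⟨hr1, hr2⟩), hrl⟩
  · obtain ⟨u₀, hu1, hu2, hu3⟩ := root_structure hL s hk hrl hr2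
    have e1 : s.v i = u₀ := by
      by_contra hcon
      exact spine_nonleaf_of_mem (spine_mem s hi) (hu3 _ hr1.symm (fun h => hcon h))
    obtain ⟨z, hz1, hz2⟩ := nonleaf_second_nbr hrl hr1.symm (a := s.v i)
    have hzl : G.IsLeafVert z := hu3 _ hz1 (fun h => hz2 (h.trans e1.symm))
    exact ⟨z, Or.inr (Or.inr ⟨r, hr1, hr2, hrl, hz1, hzl⟩), hzl⟩

/-- a deep leaf has distance 2 from its spine vertex -/
lemma deep_leaf_dist (hL : IsLobster G) (s : SpineEnum G k) {i : ℕ} (hi : i ≤ k)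
    {w z : V} (hw1 : G.Adj (s.v i) w) (hw2 : w ∉ spineSet G) (hw3 : ¬ G.IsLeafVert w)
    (hw4 : G.Adj w z) (hw5 : G.IsLeafVert z) : G.dist (s.v i) z = 2 := by
  have hc := hL.1.isConnected
  obtain ⟨n, hn⟩ := leaf_unique_nbr hw5
  have ew : w = n := nbr_eq hn hw4.symm
  have hzvi : z ≠ s.v i := fun h => spine_nonleaf s hi (h ▸ hw5)
  have hnadj : ¬ G.Adj (s.v i) z := by
    intro hadj
    have h1 : s.v i = n := nbr_eq hn hadj.symm
    have ewvi : w = s.v i := ew.trans h1.symm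
    exact hw2 (ewvi ▸ spine_mem s hi)
  have hle : G.dist (s.v i) z ≤ 2 :=
    Aset_depth hL s (Or.inr (Or.inr ⟨w, hw1, hw2, hw3, hw4, hw5⟩))
  have hge : 2 ≤ G.dist (s.v i) z := two_le_dist hc (Ne.symm hzvi) hnadj
  omega

/-- the end spine subtree is of type S2 -/
lemma end_typeS2 [Fintype V] (hL : IsLobster G) (s : SpineEnum G k) (hk : 1 ≤ k)
    (hlu : LocallyUniform G s) : typeS2 G (s.v 0) := by
  rcases hlu 0 (Nat.zero_le k) with h1 | h2
  · exfalso
    -- v0 has at least two non-leaf neighbours in the pruned graph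
    obtain ⟨hnl0, hnpl0⟩ := spine_mem s (Nat.zero_le k)
    have hv1 : s.v 1 ∈ {z | G.Adj (s.v 0) z ∧ ¬ G.IsLeafVert z} := by
      refine ⟨(s.adj 0 (Nat.zero_le k) 1 hk).mpr (Or.inl rfl), spine_nonleaf s hk⟩
    have hcard : {z | G.Adj (s.v 0) z ∧ ¬ G.IsLeafVert z}.ncard ≠ 1 := by
      intro hcon
      exact hnpl0 ((pruned_leafvert_iff hnl0).mpr hcon)
    have hpos : 0 < {z | G.Adj (s.v 0) z ∧ ¬ G.IsLeafVert z}.ncard := by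
      rw [Set.ncard_pos (Set.toFinite _)]
      exact ⟨_, hv1⟩
    have hgt : 1 < {z | G.Adj (s.v 0) z ∧ ¬ G.IsLeafVert z}.ncard := by omega
    obtain ⟨w, hw, hwv1⟩ := Set.exists_ne_of_one_lt_ncard hgt (s.v 1)
    obtain ⟨hwadj, hwnl⟩ := hw
    have hwsp : w ∉ spineSet G := by
      intro hwsp
      obtain ⟨j, hj, hv⟩ := (s.mem w).mp hwsp
      subst hv
      rcases (s.adj 0 (Nat.zero_le k) j hj).mp hwadj with h | h
      · exact hwv1 (by rw [← h])
      · omega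
    obtain ⟨u₀, hu1, hu2, hu3⟩ := root_structure hL s hk hwnl hwsp
    have e1 : s.v 0 = u₀ := by
      by_contra hcon
      exact spine_nonleaf_of_mem (spine_mem s (Nat.zero_le k))
        (hu3 _ hwadj.symm (fun h => hcon h))
    obtain ⟨z, hz1, hz2⟩ := nonleaf_second_nbr hwnl hwadj.symm (a := s.v 0)
    have hzl : G.IsLeafVert z := hu3 _ hz1 (fun h => hz2 (h.trans e1.symm))
    have hzmem : z ∈ Ssub G (s.v 0) := by
      rw [Ssub_eq_Aset hL s hk (Nat.zero_le k)]
      exact Or.inr (Or.inr ⟨w, hwadj, hwsp, hwnl, hz1, hzl⟩)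
    have := h1 z hzmem hzl
    have h2dist := deep_leaf_dist hL s (Nat.zero_le k) hwadj hwsp hwnl hz1 hzl
    omega
  · exact h2

/-- the cost of any independent broadcast is at most `betaB` -/
lemma bcost_le_betaB {V : Type*} [Fintype V] {G : SimpleGraph V} {g : V → ℕ}
    (hg : IsIndepBroadcast G g) : bcost g ≤ betaB G := by
  have hbdd : BddAbove {c : ℕ | ∃ f : V → ℕ, IsIndepBroadcast G f ∧ bcost f = c} := by
    refine ⟨∑ v, ecc G v, ?_⟩
    rintro c ⟨f', hf', rfl⟩
    exact Finset.sum_le_sum (fun v _ => hf'.1 v)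
  exact le_csSup hbdd ⟨g, hg, rfl⟩

end SB2

namespace SB2

open SimpleGraph SB

/-- distance from the end of the spine decomposes through the subtree's spine vertex -/
lemma dist_v0_decomp {V : Type*} {G : SimpleGraph V} {k : ℕ}
    (hL : IsLobster G) (s : SpineEnum G k) (hk : 1 ≤ k) (u : V) :
    posF hL s hk u + G.dist (s.v (posF hL s hk u)) u ≤ G.dist (s.v 0) u := by
  have hc := hL.1.isConnected
  set p := posF hL s hk u with hp
  have hple : p ≤ k := posF_le hL s hk u
  have hmem := posF_mem hL s hk u
  by_cases hp0 : p = 0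
  · rw [hp0]
    simp
  · have hv0notin : s.v 0 ∉ Aset G (s.v p) := fun hmem0 =>
      Aset_disjoint hL s hk (Nat.zero_le k) hple (fun h => hp0 h.symm) (Or.inl rfl) hmem0
    have hplift : (p : ℤ) ≤ G.dist (s.v 0) (s.v p) := by
      have := posF_le_dist hL s hk (s.v p)
      rwa [posF_spine hL s hk hple] at this
    have hpnat : p ≤ G.dist (s.v 0) (s.v p) := by exact_mod_cast hplift
    rcases hmem with heq | ⟨hadj, hsp⟩ | ⟨w, hw1, hw2, hw3, hw4, hw5⟩
    · -- u = v p
      rw [← heq] at hpnat ⊢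
      have : G.dist u u = 0 := hc.dist_eq_zero_iff.mpr rfl
      omega
    · -- u adjacent to v p
      have hd1 : G.dist (s.v p) u = 1 := SimpleGraph.dist_eq_one_iff_adj.mpr hadj
      have hsplit : G.dist u (s.v 0) = 1 + G.dist (s.v p) (s.v 0) := by
        by_cases hul : G.IsLeafVert u
        · obtain ⟨n, hn⟩ := leaf_unique_nbr hul
          have : s.v p = n := nbr_eq hn hadj.symm
          rw [dist_leaf_split hc hn (fun h => hv0notin (by rw [h]; exact Or.inr (Or.inl ⟨hadj, hsp⟩))), ← this]
        · exact root_cut hL s hk hple hadj hsp hul hv0notin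
      have hcomm1 : G.dist (s.v 0) u = G.dist u (s.v 0) := SimpleGraph.dist_comm
      have hcomm2 : G.dist (s.v p) (s.v 0) = G.dist (s.v 0) (s.v p) := SimpleGraph.dist_comm
      omega
    · -- deep leaf
      obtain ⟨d, hd12, hdeq, hform⟩ := leaf_dist_formula hL s hk hple
        (Or.inr (Or.inr ⟨w, hw1, hw2, hw3, hw4, hw5⟩)) hw5
      have hsplit := hform (s.v 0) hv0notin
      have hcomm1 : G.dist (s.v 0) u = G.dist u (s.v 0) := SimpleGraph.dist_comm
      have hcomm2 : G.dist (s.v p) (s.v 0) = G.dist (s.v 0) (s.v p) := SimpleGraph.dist_comm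
      omega

set_option maxHeartbeats 1000000 in
lemma key {V : Type*} [Fintype V] {G : SimpleGraph V} {k : ℕ} (hk : 1 ≤ k)
    (hL : IsLobster G) (s : SpineEnum G k) (hlu : LocallyUniform G s)
    (h2 : IsTwoLobster G s)
    (f : V → ℕ) (hf : IsIndepBroadcast G f) (hopt : bcost f = betaB G)
    {x : V} (hx : x ∈ Ssub G (s.v 0)) (hxl : G.IsLeafVert x) : f x ≤ 3 := by
  by_contra hbad
  push_neg at hbad
  have ht4 : 4 ≤ f x := hbad
  set t := f x with ht
  have hc := hL.1.isConnected
  have hk0 : (0:ℕ) ≤ k := Nat.zero_le k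
  have hcomm : ∀ a b : V, G.dist a b = G.dist b a := fun a b => SimpleGraph.dist_comm
  have hS2 : typeS2 G (s.v 0) := end_typeS2 hL s hk hlu
  have hx0 : x ∈ Aset G (s.v 0) := by rw [← Ssub_eq_Aset hL s hk hk0]; exact hx
  have hdx : G.dist (s.v 0) x = 2 := hS2 x hx hxl
  obtain ⟨dx, hdx12, hdxeq, hdxform⟩ := leaf_dist_formula hL s hk hk0 hx0 hxl
  have hdx2 : dx = 2 := by omega
  subst hdx2
  -- no other broadcast vertex in S_0
  have freeA0 : ∀ u, u ∈ Aset G (s.v 0) → u ≠ x → f u = 0 := by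
    intro u hu hne
    by_contra h0
    have hfu : 0 < f u := Nat.pos_of_ne_zero h0
    have hind := hf.2 x u (Ne.symm hne) (by omega) hfu
    have hd1 : G.dist x u ≤ G.dist x (s.v 0) + G.dist (s.v 0) u := hc.dist_triangle
    have hd2 : G.dist x (s.v 0) = 2 := by rw [hcomm]; exact hdx
    have hd3 : G.dist (s.v 0) u ≤ 2 := Aset_depth hL s hu
    have hm : t ≤ max (f x) (f u) := le_max_left _ _
    omega
  have hfar : ∀ u, u ≠ x → 0 < f u → t + 1 ≤ G.dist x u ∧ f u + 1 ≤ G.dist x u := by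
    intro u hne hfu
    have hind := hf.2 x u (Ne.symm hne) (by omega) hfu
    have h1 : t ≤ max (f x) (f u) := le_max_left _ _
    have h2' : f u ≤ max (f x) (f u) := le_max_right _ _
    omega
  have hfarA0 : ∀ u, u ≠ x → 0 < f u → u ∉ Aset G (s.v 0) := by
    intro u hne hfu hmem
    have := freeA0 u hmem hne
    omega
  have hxdist : ∀ u, u ≠ x → 0 < f u → G.dist x u = 2 + G.dist (s.v 0) u :=
    fun u hne hfu => hdxform u (hfarA0 u hne hfu)
  -- the support y of x
  have hxAcases := hx0
  rcases hxAcases with heq | ⟨hadj, _⟩ | ⟨y, hy1, hy2, hy3, hy4, hy5⟩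
  · rw [← heq] at hdx
    have : G.dist x x = 0 := hc.dist_eq_zero_iff.mpr rfl
    omega
  · have := SimpleGraph.dist_eq_one_iff_adj.mpr hadj
    omega
  obtain ⟨nx, hnx⟩ := leaf_unique_nbr hxl
  have hynx : y = nx := nbr_eq hnx hy4.symm
  -- a second branch root w₁ with a leaf z₁
  have hymem : y ∈ branchRoots G (s.v 0) := (branchRoots_mem s hk0).mpr ⟨hy1, hy2⟩
  have hgt1 : 1 < (branchRoots G (s.v 0)).ncard := by have := h2 0 hk0; omega
  obtain ⟨w₁, hw₁mem, hw₁y⟩ := Set.exists_ne_of_one_lt_ncard hgt1 y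
  obtain ⟨hw₁adj, hw₁sp⟩ := (branchRoots_mem s hk0).mp hw₁mem
  have hw₁nl : ¬ G.IsLeafVert w₁ := by
    intro hl
    have hmem : w₁ ∈ Ssub G (s.v 0) := by
      rw [Ssub_eq_Aset hL s hk hk0]
      exact Or.inr (Or.inl ⟨hw₁adj, hw₁sp⟩)
    have := hS2 w₁ hmem hl
    have := SimpleGraph.dist_eq_one_iff_adj.mpr hw₁adj
    omega
  obtain ⟨u₀, hu₀1, hu₀2, hu₀3⟩ := root_structure hL s hk hw₁nl hw₁sp
  have e₀ : s.v 0 = u₀ := by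
    by_contra hcon
    exact spine_nonleaf_of_mem (spine_mem s hk0) (hu₀3 _ hw₁adj.symm (fun h => hcon h))
  obtain ⟨z₁, hz₁adj, hz₁v0⟩ := nonleaf_second_nbr hw₁nl hw₁adj.symm (a := s.v 0)
  have hz₁l : G.IsLeafVert z₁ := hu₀3 _ hz₁adj (fun h => hz₁v0 (h.trans e₀.symm))
  have hz₁mem : z₁ ∈ Aset G (s.v 0) :=
    Or.inr (Or.inr ⟨w₁, hw₁adj, hw₁sp, hw₁nl, hz₁adj, hz₁l⟩)
  have hz₁x : z₁ ≠ x := by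
    intro h
    subst h
    exact hw₁y ((nbr_eq hnx hz₁adj.symm).trans hynx.symm)
  have hfz₁ : f z₁ = 0 := freeA0 z₁ hz₁mem hz₁x
  obtain ⟨dz, hdz12, hdzeq, hdzform'⟩ := leaf_dist_formula hL s hk hk0 hz₁mem hz₁l
  have hdz2 : dz = 2 := by
    have := hS2 z₁ (by rw [Ssub_eq_Aset hL s hk hk0]; exact hz₁mem) hz₁l
    omega
  subst hdz2
  have hdzform : ∀ u, u ∉ Aset G (s.v 0) → G.dist z₁ u = 2 + G.dist (s.v 0) u := hdzform'
  -- dist x z₁ ≥ 4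
  have hxz₁ : 4 ≤ G.dist x z₁ := by
    have hyz₁ : z₁ ≠ y := fun h => hy3 (h ▸ hz₁l)
    have h1 : G.dist x z₁ = 1 + G.dist nx z₁ :=
      dist_leaf_split hc hnx hz₁x
    obtain ⟨nz, hnz⟩ := leaf_unique_nbr hz₁l
    have hw₁nz : w₁ = nz := nbr_eq hnz hz₁adj.symm
    have h2' : G.dist z₁ y = 1 + G.dist nz y :=
      dist_leaf_split hc hnz (Ne.symm hyz₁)
    have h3 : 2 ≤ G.dist w₁ y :=
      two_le_dist hc hw₁y (tree_no_triangle hL.1 hw₁adj hy1 hw₁y)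
    have hcy : G.dist nx z₁ = G.dist z₁ y := by rw [← hynx, hcomm]
    rw [← hw₁nz] at h2'
    omega
  -- the corridor
  set I := min (t - 4) k with hIdef
  have hIk : I ≤ k := min_le_right _ _
  have hIt : I + 4 ≤ t := by
    have := min_le_left (t - 4) k
    omega
  have hchoice : ∀ i : ℕ, ∃ (z : V) (d : ℕ), 1 ≤ i → i ≤ I →
      z ∈ Aset G (s.v i) ∧ G.IsLeafVert z ∧ (d = 1 ∨ d = 2) ∧
      G.dist (s.v i) z = d ∧
      ∀ u, u ∉ Aset G (s.v i) → G.dist z u = d + G.dist (s.v i) u := by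
    intro i
    by_cases hi : 1 ≤ i ∧ i ≤ I
    · obtain ⟨z, hz1, hz2⟩ := subtree_has_leaf hL s hk h2 (le_trans hi.2 hIk)
      obtain ⟨d, hd1, hd2, hd3⟩ := leaf_dist_formula hL s hk (le_trans hi.2 hIk) hz1 hz2
      exact ⟨z, d, fun _ _ => ⟨hz1, hz2, hd1, hd2, hd3⟩⟩
    · exact ⟨x, 0, fun h1 h2' => absurd ⟨h1, h2'⟩ hi⟩
  choose ℓ dd hFF using hchoice
  -- basic corridor facts
  have hxnotin : ∀ i, 1 ≤ i → i ≤ k → x ∉ Aset G (s.v i) := fun i h1 h2' hmem =>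
    Aset_disjoint hL s hk hk0 h2' (by omega) hx0 hmem
  have hz₁notin : ∀ i, 1 ≤ i → i ≤ k → z₁ ∉ Aset G (s.v i) := fun i h1 h2' hmem =>
    Aset_disjoint hL s hk hk0 h2' (by omega) hz₁mem hmem
  have hvinotin : ∀ i, 1 ≤ i → i ≤ k → s.v i ∉ Aset G (s.v 0) := fun i h1 h2' hmem =>
    Aset_disjoint hL s hk hk0 h2' (by omega) hmem (Or.inl rfl)
  have hv0vi : ∀ i, 1 ≤ i → i ≤ k → 1 ≤ G.dist (s.v 0) (s.v i) ∧ G.dist (s.v 0) (s.v i) ≤ i :=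
    fun i h1 h2' => ⟨hc.pos_dist_of_ne (spine_ne s hk0 h2' (by omega)),
      by have := dist_spine_le' hL s (Nat.zero_le i) h2'; omega⟩
  have hℓmem : ∀ i, 1 ≤ i → i ≤ I → ℓ i ∈ Aset G (s.v i) := fun i h1 h2' => (hFF i h1 h2').1
  have hℓleaf : ∀ i, 1 ≤ i → i ≤ I → G.IsLeafVert (ℓ i) := fun i h1 h2' => (hFF i h1 h2').2.1
  have hdd12 : ∀ i, 1 ≤ i → i ≤ I → 1 ≤ dd i ∧ dd i ≤ 2 := by
    intro i h1 h2'
    have := (hFF i h1 h2').2.2.1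
    rcases this with h | h <;> omega
  have hℓform : ∀ i, 1 ≤ i → i ≤ I → ∀ u, u ∉ Aset G (s.v i) →
      G.dist (ℓ i) u = dd i + G.dist (s.v i) u := fun i h1 h2' => (hFF i h1 h2').2.2.2.2
  -- distance from x to corridor leaves
  have hdistxℓ : ∀ i, 1 ≤ i → i ≤ I → 4 ≤ G.dist x (ℓ i) ∧ G.dist x (ℓ i) ≤ t := by
    intro i h1 h2'
    have hik := le_trans h2' hIk
    have hform := hℓform i h1 h2' x (hxnotin i h1 hik)
    have hvix : G.dist x (s.v i) = 2 + G.dist (s.v 0) (s.v i) :=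
      hdxform (s.v i) (hvinotin i h1 hik)
    have hcomm1 : G.dist (ℓ i) x = G.dist x (ℓ i) := hcomm _ _
    have hcomm2 : G.dist (s.v i) x = G.dist x (s.v i) := hcomm _ _
    have hdd := hdd12 i h1 h2'
    have hvv := hv0vi i h1 hik
    omega
  have hℓx : ∀ i, 1 ≤ i → i ≤ I → ℓ i ≠ x := by
    intro i h1 h2' heq
    exact hxnotin i h1 (le_trans h2' hIk) (heq ▸ hℓmem i h1 h2')
  have hfℓ : ∀ i, 1 ≤ i → i ≤ I → f (ℓ i) = 0 := by
    intro i h1 h2'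
    by_contra h0
    have := (hfar (ℓ i) (hℓx i h1 h2') (Nat.pos_of_ne_zero h0)).1
    have := (hdistxℓ i h1 h2').2
    omega
  have hℓz₁ : ∀ i, 1 ≤ i → i ≤ I → ℓ i ≠ z₁ := by
    intro i h1 h2' heq
    exact hz₁notin i h1 (le_trans h2' hIk) (heq ▸ hℓmem i h1 h2')
  -- distance from z₁ to corridor leaves
  have hdistz₁ℓ : ∀ i, 1 ≤ i → i ≤ I → 4 ≤ G.dist z₁ (ℓ i) := by
    intro i h1 h2'
    have hik := le_trans h2' hIk
    have hform := hℓform i h1 h2' z₁ (hz₁notin i h1 hik)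
    have hviz : G.dist z₁ (s.v i) = 2 + G.dist (s.v 0) (s.v i) :=
      hdzform (s.v i) (hvinotin i h1 hik)
    have hcomm1 : G.dist (ℓ i) z₁ = G.dist z₁ (ℓ i) := hcomm _ _
    have hcomm2 : G.dist (s.v i) z₁ = G.dist z₁ (s.v i) := hcomm _ _
    have hdd := hdd12 i h1 h2'
    have hvv := hv0vi i h1 hik
    omega
  -- corridor leaves are pairwise at distance ≥ 3
  have hℓpair : ∀ i j, 1 ≤ i → i < j → j ≤ I → 3 ≤ G.dist (ℓ i) (ℓ j) := by
    intro i j h1 hij h2'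
    have hiI : i ≤ I := by omega
    have hik := le_trans hiI hIk
    have hjk := le_trans h2' hIk
    have hℓinotj : ℓ i ∉ Aset G (s.v j) := fun hmem =>
      Aset_disjoint hL s hk hik hjk (by omega) (hℓmem i h1 hiI) hmem
    have hvjnoti : s.v j ∉ Aset G (s.v i) := fun hmem =>
      Aset_disjoint hL s hk hjk hik (by omega) (Or.inl rfl) hmem
    have hform1 := hℓform j (by omega) h2' (ℓ i) hℓinotj
    have hform2 := hℓform i h1 hiI (s.v j) hvjnoti
    have hvivj : 1 ≤ G.dist (s.v i) (s.v j) :=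
      hc.pos_dist_of_ne (spine_ne s hik hjk (by omega))
    have hcomm1 : G.dist (ℓ j) (ℓ i) = G.dist (ℓ i) (ℓ j) := hcomm _ _
    have hcomm2 : G.dist (s.v j) (ℓ i) = G.dist (ℓ i) (s.v j) := hcomm _ _
    have hcomm3 : G.dist (s.v i) (s.v j) = G.dist (s.v j) (s.v i) := hcomm _ _
    have hddi := hdd12 i h1 hiI
    have hddj := hdd12 j (by omega) h2'
    omega
  -- distance bound from far vertices to corridor leaves
  have hfarℓ : ∀ u, u ≠ x → 0 < f u → ∀ i, 1 ≤ i → i ≤ I →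
      G.dist x u ≤ G.dist u (ℓ i) + I + 1 ∧ 4 ≤ G.dist u (ℓ i) := by
    intro u hne hfu i h1 h2'
    have hik := le_trans h2' hIk
    have hunotAi : u ∉ Aset G (s.v i) := by
      intro hmem
      have hd1 : G.dist x u ≤ G.dist x (s.v i) + G.dist (s.v i) u := hc.dist_triangle
      have hd2 : G.dist x (s.v i) = 2 + G.dist (s.v 0) (s.v i) :=
        hdxform (s.v i) (hvinotin i h1 hik)
      have hd3 : G.dist (s.v i) u ≤ 2 := Aset_depth hL s hmem
      have hvv := hv0vi i h1 hik
      have := (hfar u hne hfu).1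
      omega
    have hform := hℓform i h1 h2' u hunotAi
    have htri : G.dist (s.v 0) u ≤ G.dist (s.v 0) (s.v i) + G.dist (s.v i) u :=
      hc.dist_triangle
    have hvv := hv0vi i h1 hik
    have hdd := hdd12 i h1 h2'
    have hxu := hxdist u hne hfu
    have hfaru := (hfar u hne hfu).1
    have hcomm1 : G.dist (ℓ i) u = G.dist u (ℓ i) := hcomm _ _
    omega
  -- the set of blockers
  set Wset : Set V :=
    {u | u ≠ x ∧ 0 < f u ∧ ∃ i, 1 ≤ i ∧ i ≤ I ∧ G.dist u (ℓ i) ≤ max (f u) 2} with hWdef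
  -- blockers have large f-value
  have hWbig : ∀ u, u ∈ Wset → 4 ≤ f u ∧ G.dist x u + 3 ≤ f u + t := by
    rintro u ⟨hne, hfu, i, h1, h2', hble⟩
    have hb := hfarℓ u hne hfu i h1 h2'
    have hmax : max (f u) 2 = f u ∨ max (f u) 2 = 2 := by
      rcases le_total (f u) 2 with h | h
      · exact Or.inr (max_eq_right h)
      · exact Or.inl (max_eq_left h)
    have hIt4 : I ≤ t - 4 := min_le_left _ _
    rcases hmax with h | h <;> omega
  -- at most one blocker
  have hWone : ∀ u u', u ∈ Wset → u' ∈ Wset → u = u' := by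
    intro u u' hu hu'
    by_contra hne
    have aux : ∀ a b, a ∈ Wset → b ∈ Wset → a ≠ b →
        posF hL s hk a ≤ posF hL s hk b → False := by
      intro a b ha hb hab hple
      have hax := ha.1
      have hfa := ha.2.1
      have hbx := hb.1
      have hfb := hb.2.1
      set p := posF hL s hk a with hpa
      set q := posF hL s hk b with hqb
      have hpk : p ≤ k := posF_le hL s hk a
      have hqk : q ≤ k := posF_le hL s hk b
      have hea : G.dist (s.v p) a ≤ 2 := Aset_depth hL s (posF_mem hL s hk a)
      have heb : G.dist (s.v q) b ≤ 2 := Aset_depth hL s (posF_mem hL s hk b)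
      have hDa : G.dist x a = 2 + G.dist (s.v 0) a := hxdist a hax hfa
      have hDb : G.dist x b = 2 + G.dist (s.v 0) b := hxdist b hbx hfb
      have hDa' : t + 1 ≤ G.dist x a := (hfar a hax hfa).1
      have hDb' : t + 1 ≤ G.dist x b := (hfar b hbx hfb).1
      have hdeca := dist_v0_decomp hL s hk a
      have hdecb := dist_v0_decomp hL s hk b
      rw [← hpa] at hdeca
      rw [← hqb] at hdecb
      have hupa : G.dist (s.v 0) a ≤ G.dist (s.v 0) (s.v p) + G.dist (s.v p) a :=
        hc.dist_triangle
      have hspa : G.dist (s.v 0) (s.v p) ≤ p := by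
        have := dist_spine_le' hL s (Nat.zero_le p) hpk
        omega
      have hfbig := (hWbig b hb).2
      have hind := hf.2 a b hab hfa hfb
      have hmaxb : f b ≤ max (f a) (f b) := le_max_right _ _
      have htri1 : G.dist a b ≤ G.dist a (s.v p) + G.dist (s.v p) b := hc.dist_triangle
      have htri2 : G.dist (s.v p) b ≤ G.dist (s.v p) (s.v q) + G.dist (s.v q) b :=
        hc.dist_triangle
      have hspq : G.dist (s.v p) (s.v q) ≤ q - p := dist_spine_le' hL s hple hqk
      have hcomm1 : G.dist a (s.v p) = G.dist (s.v p) a := hcomm _ _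
      omega
    rcases le_total (posF hL s hk u) (posF hL s hk u') with h | h
    · exact aux u u' hu hu' hne h
    · exact aux u' u hu' hu (Ne.symm hne) h
  -- eccentricity bound : t ≤ k + 4
  have htk : t ≤ k + 4 := by
    have h1 : t ≤ ecc G x := hf.1 x
    have h2' : ecc G x ≤ k + 4 := by
      apply Finset.sup_le
      intro u _
      have hp := posF_le hL s hk u
      have hdepth : G.dist (s.v (posF hL s hk u)) u ≤ 2 :=
        Aset_depth hL s (posF_mem hL s hk u)
      have ht1 : G.dist x u ≤ G.dist x (s.v 0) + G.dist (s.v 0) u := hc.dist_triangle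
      have ht2 : G.dist (s.v 0) u ≤ G.dist (s.v 0) (s.v (posF hL s hk u)) +
          G.dist (s.v (posF hL s hk u)) u := hc.dist_triangle
      have ht3 : G.dist (s.v 0) (s.v (posF hL s hk u)) ≤ posF hL s hk u := by
        have := dist_spine_le' hL s (Nat.zero_le _) hp
        omega
      have ht5 : G.dist x (s.v 0) = 2 := by rw [hcomm]; exact hdx
      omega
    omega
  -- properties of blockers against corridor leaves
  have hWℓ : ∀ u, u ∈ Wset → ∀ i, 1 ≤ i → i ≤ I →
      (G.dist x u + 2 - t) + 1 ≤ G.dist u (ℓ i) ∧ 3 ≤ G.dist x u + 2 - t := by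
    intro u hu i h1 h2'
    have hb := hfarℓ u hu.1 hu.2.1 i h1 h2'
    have hfaru := (hfar u hu.1 hu.2.1).1
    have hIt4 : I ≤ t - 4 := min_le_left _ _
    omega
  -- z₁ is at the same distance as x from any far broadcast vertex
  have holdz₁ : ∀ u, u ≠ x → 0 < f u → G.dist z₁ u = G.dist x u := by
    intro u hne hfu
    rw [hdzform u (hfarA0 u hne hfu), hxdist u hne hfu]
  -- the new broadcast function
  set newf : V → ℕ := fun v =>
    if v = x then 3 else if v = z₁ then 3
    else if ∃ i, 1 ≤ i ∧ i ≤ I ∧ v = ℓ i then 2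
    else if v ∈ Wset then G.dist x v + 2 - t else f v with hnfdef
  have hvx : newf x = 3 := by simp [hnfdef]
  have hvz₁ : newf z₁ = 3 := by simp [hnfdef, hz₁x]
  have hvℓ : ∀ i, 1 ≤ i → i ≤ I → newf (ℓ i) = 2 := by
    intro i h1 h2'
    have h3 := hℓx i h1 h2'
    have h4 := hℓz₁ i h1 h2'
    have hE : ∃ i', 1 ≤ i' ∧ i' ≤ I ∧ ℓ i = ℓ i' := ⟨i, h1, h2', rfl⟩
    simp [hnfdef, h3, h4, hE]
  have hWnotx : ∀ u, u ∈ Wset → u ≠ x ∧ u ≠ z₁ ∧ ¬ (∃ i, 1 ≤ i ∧ i ≤ I ∧ u = ℓ i) := by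
    intro u hu
    refine ⟨hu.1, ?_, ?_⟩
    · intro h
      have := hu.2.1
      rw [h, hfz₁] at this
      omega
    · rintro ⟨i, h1, h2', rfl⟩
      have := hfℓ i h1 h2'
      have := hu.2.1
      omega
  have hvW : ∀ u, u ∈ Wset → newf u = G.dist x u + 2 - t := by
    intro u hu
    obtain ⟨e1, e2, e3⟩ := hWnotx u hu
    simp [hnfdef, e1, e2, e3, hu]
  have hvold : ∀ u, u ≠ x → u ≠ z₁ → ¬ (∃ i, 1 ≤ i ∧ i ≤ I ∧ u = ℓ i) → u ∉ Wset →
      newf u = f u := by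
    intro u e1 e2 e3 e4
    simp [hnfdef, e1, e2, e3, e4]
  -- old broadcast vertices are far from everything
  have holdℓ : ∀ u, u ≠ x → 0 < f u → u ∉ Wset → ∀ i, 1 ≤ i → i ≤ I →
      max (f u) 2 < G.dist u (ℓ i) := by
    intro u e1 e2 e4 i h1 h2'
    by_contra hcon
    push_neg at hcon
    exact e4 ⟨e1, e2, i, h1, h2', hcon⟩
  -- newf is a broadcast
  have hecc : ∀ a b : V, G.dist a b ≤ ecc G a := fun a b => Finset.le_sup (Finset.mem_univ b)
  have hbroad : IsBroadcast G newf := by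
    intro v
    by_cases e1 : v = x
    · rw [e1, hvx]
      have := hf.1 x
      omega
    by_cases e2 : v = z₁
    · rw [e2, hvz₁]
      have h1 := hecc z₁ x
      have h2' : G.dist z₁ x = G.dist x z₁ := hcomm _ _
      omega
    by_cases e3 : ∃ i, 1 ≤ i ∧ i ≤ I ∧ v = ℓ i
    · obtain ⟨i, h1, h2', rfl⟩ := e3
      rw [hvℓ i h1 h2']
      have ha := hecc (ℓ i) x
      have hb : G.dist (ℓ i) x = G.dist x (ℓ i) := hcomm _ _
      have := (hdistxℓ i h1 h2').1
      omega
    by_cases e4 : v ∈ Wset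
    · rw [hvW v e4]
      have h1 := (hWbig v e4).2
      have := hf.1 v
      omega
    · rw [hvold v e1 e2 e3 e4]
      exact hf.1 v
  -- newf is independent
  have hcat : ∀ u : V, 0 < newf u → u = x ∨ u = z₁ ∨ (∃ i, 1 ≤ i ∧ i ≤ I ∧ u = ℓ i) ∨
      u ∈ Wset ∨ (0 < f u ∧ u ≠ x ∧ u ≠ z₁ ∧ ¬(∃ i, 1 ≤ i ∧ i ≤ I ∧ u = ℓ i) ∧ u ∉ Wset) := by
    intro u hu
    by_cases e1 : u = x
    · exact Or.inl e1
    by_cases e2 : u = z₁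
    · exact Or.inr (Or.inl e2)
    by_cases e3 : ∃ i, 1 ≤ i ∧ i ≤ I ∧ u = ℓ i
    · exact Or.inr (Or.inr (Or.inl e3))
    by_cases e4 : u ∈ Wset
    · exact Or.inr (Or.inr (Or.inr (Or.inl e4)))
    · rw [hvold u e1 e2 e3 e4] at hu
      exact Or.inr (Or.inr (Or.inr (Or.inr ⟨hu, e1, e2, e3, e4⟩)))
  have hindep : ∀ u v : V, u ≠ v → 0 < newf u → 0 < newf v →
      max (newf u) (newf v) < G.dist u v := by
    intro u v huv hu hv
    rcases hcat u hu with pux | puz | ⟨i, hi1, hi2, puℓ⟩ | hWu | ⟨hfu, hu1, hu2, hu3, hu4⟩ <;>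
      rcases hcat v hv with pvx | pvz | ⟨j, hj1, hj2, pvℓ⟩ | hWv | ⟨hfv, hv1, hv2, hv3, hv4⟩
    -- u = x row
    · exact absurd (pux.trans pvx.symm) huv
    · rw [pux, pvz, hvx, hvz₁]
      omega
    · rw [pux, pvℓ, hvx, hvℓ j hj1 hj2]
      have := (hdistxℓ j hj1 hj2).1
      omega
    · rw [pux, hvx, hvW v hWv]
      have := (hfar v hWv.1 hWv.2.1).1
      omega
    · rw [pux, hvx, hvold v hv1 hv2 hv3 hv4]
      have := hfar v hv1 hfv
      omega
    -- u = z₁ row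
    · rw [puz, pvx, hvz₁, hvx]
      have h2' : G.dist z₁ x = G.dist x z₁ := hcomm _ _
      omega
    · exact absurd (puz.trans pvz.symm) huv
    · rw [puz, pvℓ, hvz₁, hvℓ j hj1 hj2]
      have := hdistz₁ℓ j hj1 hj2
      omega
    · rw [puz, hvz₁, hvW v hWv]
      have h1 := (hfar v hWv.1 hWv.2.1).1
      have h2' := holdz₁ v hWv.1 hWv.2.1
      omega
    · rw [puz, hvz₁, hvold v hv1 hv2 hv3 hv4]
      have h1 := hfar v hv1 hfv
      have h2' := holdz₁ v hv1 hfv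
      omega
    -- u = ℓ i row
    · rw [puℓ, pvx, hvℓ i hi1 hi2, hvx]
      have := (hdistxℓ i hi1 hi2).1
      have h2' : G.dist (ℓ i) x = G.dist x (ℓ i) := hcomm _ _
      omega
    · rw [puℓ, pvz, hvℓ i hi1 hi2, hvz₁]
      have := hdistz₁ℓ i hi1 hi2
      have h2' : G.dist (ℓ i) z₁ = G.dist z₁ (ℓ i) := hcomm _ _
      omega
    · rw [puℓ, pvℓ, hvℓ i hi1 hi2, hvℓ j hj1 hj2]
      rcases lt_trichotomy i j with h | h | h
      · have := hℓpair i j hi1 h hj2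
        omega
      · rw [puℓ, pvℓ, h] at huv
        exact absurd rfl huv
      · have := hℓpair j i hj1 h hi2
        have h2' : G.dist (ℓ i) (ℓ j) = G.dist (ℓ j) (ℓ i) := hcomm _ _
        omega
    · rw [puℓ, hvℓ i hi1 hi2, hvW v hWv]
      have := hWℓ v hWv i hi1 hi2
      have h2' : G.dist (ℓ i) v = G.dist v (ℓ i) := hcomm _ _
      omega
    · rw [puℓ, hvℓ i hi1 hi2, hvold v hv1 hv2 hv3 hv4]
      have := holdℓ v hv1 hfv hv4 i hi1 hi2
      have h2' : G.dist (ℓ i) v = G.dist v (ℓ i) := hcomm _ _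
      have hm1 : f v ≤ max (f v) 2 := le_max_left _ _
      omega
    -- u ∈ Wset row
    · rw [pvx, hvW u hWu, hvx]
      have := (hfar u hWu.1 hWu.2.1).1
      have h2' : G.dist u x = G.dist x u := hcomm _ _
      omega
    · rw [pvz, hvW u hWu, hvz₁]
      have h1 := (hfar u hWu.1 hWu.2.1).1
      have h2' := holdz₁ u hWu.1 hWu.2.1
      have h3 : G.dist u z₁ = G.dist z₁ u := hcomm _ _
      omega
    · rw [pvℓ, hvW u hWu, hvℓ j hj1 hj2]
      have := hWℓ u hWu j hj1 hj2
      omega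
    · exact absurd (hWone u v hWu hWv) huv
    · rw [hvW u hWu, hvold v hv1 hv2 hv3 hv4]
      have h1 := hf.2 u v huv hWu.2.1 hfv
      have h2' := (hWbig u hWu).2
      have h3 := (hfar u hWu.1 hWu.2.1).1
      have hm1 : f u ≤ max (f u) (f v) := le_max_left _ _
      have hm2 : f v ≤ max (f u) (f v) := le_max_right _ _
      omega
    -- u old row
    · rw [pvx, hvold u hu1 hu2 hu3 hu4, hvx]
      have := hfar u hu1 hfu
      have h2' : G.dist u x = G.dist x u := hcomm _ _
      omega
    · rw [pvz, hvold u hu1 hu2 hu3 hu4, hvz₁]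
      have h1 := hfar u hu1 hfu
      have h2' := holdz₁ u hu1 hfu
      have h3 : G.dist u z₁ = G.dist z₁ u := hcomm _ _
      omega
    · rw [pvℓ, hvold u hu1 hu2 hu3 hu4, hvℓ j hj1 hj2]
      have := holdℓ u hu1 hfu hu4 j hj1 hj2
      have hm1 : f u ≤ max (f u) 2 := le_max_left _ _
      omega
    · rw [hvold u hu1 hu2 hu3 hu4, hvW v hWv]
      have h1 := hf.2 u v huv hfu hWv.2.1
      have h2' := (hWbig v hWv).2
      have h3 := (hfar v hWv.1 hWv.2.1).1
      have hm1 : f u ≤ max (f u) (f v) := le_max_left _ _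
      have hm2 : f v ≤ max (f u) (f v) := le_max_right _ _
      omega
    · rw [hvold u hu1 hu2 hu3 hu4, hvold v hv1 hv2 hv3 hv4]
      exact hf.2 u v huv hfu hfv
  -- cost comparison
  have hWfinite : Wset.Finite := Set.toFinite _
  classical
  set Lfin : Finset V := (Finset.Icc 1 I).image ℓ with hLfindef
  set Wfin : Finset V := hWfinite.toFinset with hWfindef
  have hmemL : ∀ v, v ∈ Lfin ↔ ∃ i, 1 ≤ i ∧ i ≤ I ∧ v = ℓ i := by
    intro v
    simp only [hLfindef, Finset.mem_image, Finset.mem_Icc]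
    constructor
    · rintro ⟨i, ⟨h1, h2'⟩, rfl⟩
      exact ⟨i, h1, h2', rfl⟩
    · rintro ⟨i, h1, h2', rfl⟩
      exact ⟨i, ⟨h1, h2'⟩, rfl⟩
  have hmemW : ∀ v, v ∈ Wfin ↔ v ∈ Wset := fun v => hWfinite.mem_toFinset
  set M : Finset V := insert x (insert z₁ (Lfin ∪ Wfin)) with hMdef
  have hxnotM : x ∉ insert z₁ (Lfin ∪ Wfin) := by
    simp only [Finset.mem_insert, Finset.mem_union]
    push_neg
    refine ⟨Ne.symm hz₁x, ?_, ?_⟩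
    · intro hmem
      obtain ⟨i, h1, h2', heq⟩ := (hmemL x).mp hmem
      exact hℓx i h1 h2' heq.symm
    · intro hmem
      exact ((hmemW x).mp hmem).1 rfl
  have hz₁notM : z₁ ∉ Lfin ∪ Wfin := by
    simp only [Finset.mem_union]
    push_neg
    constructor
    · intro hmem
      obtain ⟨i, h1, h2', heq⟩ := (hmemL z₁).mp hmem
      exact hℓz₁ i h1 h2' heq.symm
    · intro hmem
      have := ((hmemW z₁).mp hmem).2.1
      rw [hfz₁] at this
      omega
  have hLWdisj : Disjoint Lfin Wfin := by
    rw [Finset.disjoint_left]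
    intro v hvL hvW
    obtain ⟨i, h1, h2', rfl⟩ := (hmemL v).mp hvL
    have := ((hmemW _).mp hvW).2.1
    have := hfℓ i h1 h2'
    omega
  have hsumL_newf : ∑ v ∈ Lfin, newf v = 2 * I := by
    rw [hLfindef, Finset.sum_image]
    · have : ∀ i ∈ Finset.Icc 1 I, newf (ℓ i) = 2 := by
        intro i hi
        simp only [Finset.mem_Icc] at hi
        exact hvℓ i hi.1 hi.2
      rw [Finset.sum_congr rfl this, Finset.sum_const, Nat.card_Icc]
      simp [Nat.mul_comm]
    · intro i hi j hj heq
      simp only [Finset.mem_coe, Finset.mem_Icc] at hi hj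
      by_contra hne
      exact Aset_disjoint hL s hk (le_trans hi.2 hIk) (le_trans hj.2 hIk) hne
        (hℓmem i hi.1 hi.2) (heq ▸ hℓmem j hj.1 hj.2)
  have hsumL_f : ∑ v ∈ Lfin, f v = 0 := by
    apply Finset.sum_eq_zero
    intro v hv
    obtain ⟨i, h1, h2', rfl⟩ := (hmemL v).mp hv
    exact hfℓ i h1 h2'
  have hMnewf : ∑ v ∈ M, newf v = 6 + 2 * I + ∑ v ∈ Wfin, newf v := by
    rw [hMdef, Finset.sum_insert hxnotM, Finset.sum_insert hz₁notM,
      Finset.sum_union hLWdisj, hvx, hvz₁, hsumL_newf]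
    ring
  have hMf : ∑ v ∈ M, f v = t + ∑ v ∈ Wfin, f v := by
    rw [hMdef, Finset.sum_insert hxnotM, Finset.sum_insert hz₁notM,
      Finset.sum_union hLWdisj, hfz₁, hsumL_f]
    omega
  have hsumM : ∑ v ∈ M, f v < ∑ v ∈ M, newf v := by
    rw [hMnewf, hMf]
    rcases Set.eq_empty_or_nonempty Wset with hWe | ⟨w₀, hw₀⟩
    · have hWn : ∀ (g : V → ℕ), ∑ v ∈ Wfin, g v = 0 := by
        intro g
        apply Finset.sum_eq_zero
        intro v hv
        exfalso
        have hvw := (hmemW v).mp hv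
        rw [hWe] at hvw
        exact Set.notMem_empty v hvw
      rw [hWn newf, hWn f]
      have hIcase : I = t - 4 ∨ I = k := by rw [hIdef]; exact min_choice _ _
      rcases hIcase with h | h <;> omega
    · have hWsing : Wfin = {w₀} := by
        ext u
        rw [hmemW, Finset.mem_singleton]
        exact ⟨fun h => hWone u w₀ h hw₀, fun h => h ▸ hw₀⟩
      rw [hWsing]
      simp only [Finset.sum_singleton]
      rw [hvW w₀ hw₀]
      -- with a blocker present, I = t - 4
      obtain ⟨hw₀x, hw₀f, i0, hi01, hi0I, _⟩ := hw₀
      have hp := posF_le hL s hk w₀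
      have hdepth : G.dist (s.v (posF hL s hk w₀)) w₀ ≤ 2 :=
        Aset_depth hL s (posF_mem hL s hk w₀)
      have ht1 : G.dist x w₀ = 2 + G.dist (s.v 0) w₀ := hxdist w₀ hw₀x hw₀f
      have ht2 : G.dist (s.v 0) w₀ ≤ G.dist (s.v 0) (s.v (posF hL s hk w₀)) +
          G.dist (s.v (posF hL s hk w₀)) w₀ := hc.dist_triangle
      have ht3 : G.dist (s.v 0) (s.v (posF hL s hk w₀)) ≤ posF hL s hk w₀ := by
        have := dist_spine_le' hL s (Nat.zero_le _) hp
        omega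
      have hfarw := hfar w₀ hw₀x hw₀f
      have hIcase : I = t - 4 ∨ I = k := by rw [hIdef]; exact min_choice _ _
      have hIeq : I = t - 4 := by rcases hIcase with h | h <;> omega
      omega
  have hlt : bcost f < bcost newf := by
    have h1 := Finset.sum_sdiff (f := newf) (Finset.subset_univ M)
    have h2' := Finset.sum_sdiff (f := f) (Finset.subset_univ M)
    have h3 : ∑ v ∈ Finset.univ \ M, newf v = ∑ v ∈ Finset.univ \ M, f v := by
      apply Finset.sum_congr rfl
      intro v hv
      simp only [Finset.mem_sdiff, hMdef, Finset.mem_insert, Finset.mem_union] at hv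
      push_neg at hv
      obtain ⟨-, e1, e2, e3, e4⟩ := hv
      exact hvold v e1 e2 (fun hcon => e3 ((hmemL v).mpr hcon)) (fun hcon => e4 ((hmemW v).mpr hcon))
    unfold bcost
    omega
  have hle := bcost_le_betaB ⟨hbroad, hindep⟩
  omega


end SB2

namespace SB2

open SimpleGraph SB

/-- reversing a spine enumeration -/
noncomputable def revEnum {V : Type*} {G : SimpleGraph V} {k : ℕ} (s : SpineEnum G k) :
    SpineEnum G k where
  v i := s.v (k - i)
  inj := by
    intro i hi j hj h
    have := s.inj (k - i) (by omega) (k - j) (by omega) h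
    omega
  mem := by
    intro x
    rw [s.mem x]
    constructor
    · rintro ⟨i, hi, rfl⟩
      exact ⟨k - i, by omega, by show s.v (k - (k - i)) = s.v i; rw [Nat.sub_sub_self hi]⟩
    · rintro ⟨i, hi, rfl⟩
      exact ⟨k - i, by omega, rfl⟩
  adj := by
    intro i hi j hj
    rw [s.adj (k - i) (by omega) (k - j) (by omega)]
    omega

end SB2

/-- if `L` is a locally uniform 2-lobster of length `k ≥ 1` and `f`
is an optimal independent broadcast on `L`, then there exists an optimal
independent broadcast `g` on `L` with `g ℓ ≤ 3` for every leaf `ℓ` of the end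
spine-subtrees `S_0` and `S_k`. -/
theorem stmt14 {V : Type*} [Fintype V] (G : SimpleGraph V) (k : ℕ) (hk : 1 ≤ k)
    (hL : IsLobster G) (s : SpineEnum G k) (hlu : LocallyUniform G s)
    (h2 : IsTwoLobster G s)
    (f : V → ℕ) (hf : IsIndepBroadcast G f) (hopt : bcost f = betaB G) :
    ∃ g : V → ℕ, IsIndepBroadcast G g ∧ bcost g = betaB G ∧
      ∀ x : V, x ∈ Ssub G (s.v 0) ∪ Ssub G (s.v k) → G.IsLeafVert x → g x ≤ 3 := by
  refine ⟨f, hf, hopt, ?_⟩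
  intro x hx hleaf
  rcases hx with hx | hx
  · exact SB2.key hk hL s hlu h2 f hf hopt hx hleaf
  · have h0 : (SB2.revEnum s).v 0 = s.v k := by
      show s.v (k - 0) = s.v k
      rw [Nat.sub_zero]
    refine SB2.key hk hL (SB2.revEnum s) (fun i hi => hlu (k - i) (by omega))
      (fun i hi => h2 (k - i) (by omega)) f hf hopt ?_ hleaf
    rw [h0]
    exact hx
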